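/- arXiv:2303.12897 — 7 statements merged into one kernel-verified Lean document; each statement's English description precedes it below -/
import Mathlib

section
/- The embedding operators between generalized Jacobi bases are banded, with bandwidth one more than the degree of the corresponding weight factor. Precisely: (i) ∫_{−1}^{1} w^{(a+1,b,c)}(z) P_n^{(a,b,c)}(z) P_m^{(a+1,b,c)}(z) dz = 0 unless n−1 ≤ m ≤ n; (ii) ∫_{−1}^{1} w^{(a,b+1,c)}(z) P_n^{(a,b,c)}(z) P_m^{(a,b+1,c)}(z) dz = 0 unless n−1 ≤ m ≤ n; (iii) for each index i, writing dᵢ = deg pᵢ and c+eᵢ for the exponent vector with cᵢ replaced by cᵢ+1: ∫_{−1}^{1} w^{(a,b,c+eᵢ)}(z) P_n^{(a,b,c)}(z) P_m^{(a,b,c+eᵢ)}(z) dz = 0 unless n−dᵢ ≤ m ≤ n. -/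
open MeasureTheory Polynomial

/-- The generalized Jacobi weight `(1-z)^a (1+z)^b p₁(z)^{c₁} ⋯ p_N(z)^{c_N}`. -/
noncomputable def gjWeight (a b : ℝ) {N : ℕ} (c : Fin N → ℝ) (p : Fin N → Polynomial ℝ)
    (z : ℝ) : ℝ :=
  (1 - z) ^ a * (1 + z) ^ b * ∏ i, (p i).eval z ^ (c i)

/-- `P` is the sequence of orthonormal polynomials for the weight `w` on `(-1,1)`:
`deg P_k = k`, positive leading coefficients, and `⟨P_j, P_k⟩ = δ_{jk}`. -/
def IsONPolys (w : ℝ → ℝ) (P : ℕ → Polynomial ℝ) : Prop :=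
  (∀ k, (P k).degree = k) ∧ (∀ k, 0 < (P k).leadingCoeff) ∧
    ∀ j k, (∫ z in Set.Ioo (-1 : ℝ) 1, w z * (P j).eval z * (P k).eval z)
      = if j = k then (1 : ℝ) else 0

/-!
Raising `a`, `b` or `cᵢ` by one multiplies the weight `w` by `q = 1 - z`, `1 + z` or `pᵢ`.
If `w' = q w` with `deg q ≤ d`, then `∫ w' Pₙ Qₘ = ∫ w Pₙ (q Qₘ)` vanishes when `m + d < n`,
because `Pₙ` is `w`-orthogonal to all polynomials of lower degree, and it vanishes when `n < m`
because `Qₘ` is `w'`-orthogonal to `Pₙ`.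
-/

open Set

theorem MeasureTheory.IntegrableOn.mul_polynomial_eval {v : ℝ → ℝ}
    (hv : IntegrableOn v (Ioo (-1) 1)) (q : ℝ[X]) :
    IntegrableOn (fun z => v z * q.eval z) (Ioo (-1) 1) :=
  hv.mul_continuousOn_of_subset q.continuousOn measurableSet_Ioo isCompact_Icc
    Ioo_subset_Icc_self

noncomputable def weightedIntegral (v : ℝ → ℝ) (hv : IntegrableOn v (Ioo (-1) 1)) :
    ℝ[X] →ₗ[ℝ] ℝ where
  toFun q := ∫ z in Ioo (-1 : ℝ) 1, v z * q.eval z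
  map_add' q r := by
    simp only [eval_add, mul_add]
    exact integral_add (hv.mul_polynomial_eval q) (hv.mul_polynomial_eval r)
  map_smul' t q := by
    simp only [eval_smul, smul_eq_mul, RingHom.id_apply, mul_left_comm _ t]
    exact integral_const_mul t _

namespace IsONPolys

variable {w : ℝ → ℝ} {P : ℕ → ℝ[X]}

/-- `P 0` is a nonzero constant with `∫ w (P 0)² = 1`. -/
theorem integrableOn (hP : IsONPolys w P) : IntegrableOn w (Ioo (-1) 1) := by
  have hdeg : (P 0).degree = 0 := by simpa using hP.1 0
  set c := (P 0).coeff 0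
  have hc : c ≠ 0 := by
    have := (hP.2.1 0).ne'
    rwa [leadingCoeff, natDegree_eq_of_degree_eq_some hdeg] at this
  have heval : ∀ z, (P 0).eval z = c := fun z => by
    rw [eq_C_of_degree_eq_zero hdeg, eval_C]
  have hsq : IntegrableOn (fun z => w z * (P 0).eval z * (P 0).eval z) (Ioo (-1) 1) := by
    by_contra h
    simpa [integral_undef h] using hP.2.2 0 0
  refine IntegrableOn.congr_fun (hsq.mul_const (c * c)⁻¹) (fun z _ => ?_) measurableSet_Ioo
  simp only [heval]
  field_simp

theorem integral_mul_eval_eq_zero_of_degree_lt (hP : IsONPolys w P) {n : ℕ} {q : ℝ[X]}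
    (hq : q.degree < n) :
    ∫ z in Ioo (-1 : ℝ) 1, w z * (P n).eval z * q.eval z = 0 := by
  let L := weightedIntegral _ (hP.integrableOn.mul_polynomial_eval (P n))
  have hspan : q ∈ Submodule.span ℝ (P '' Iio n) := by
    rw [Sequence.span_degreeLT ⟨P, hP.1⟩ fun i _ => (hP.2.1 i).ne'.isUnit]
    exact mem_degreeLT.2 hq
  have hker : Submodule.span ℝ (P '' Iio n) ≤ LinearMap.ker L := by
    rw [Submodule.span_le]
    rintro _ ⟨k, hk, rfl⟩
    simpa [L, weightedIntegral, hP.2.2 n k] using (ne_of_lt (mem_Iio.1 hk)).symm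
  exact hker hspan

theorem integral_eq_zero_of_notMem_band {w' : ℝ → ℝ} {Q : ℕ → ℝ[X]} {q : ℝ[X]} {d : ℕ}
    (hqd : q.degree ≤ d) (hw' : ∀ z ∈ Ioo (-1 : ℝ) 1, w' z = q.eval z * w z)
    (hP : IsONPolys w P) (hQ : IsONPolys w' Q) {n m : ℕ} (hnm : ¬(n ≤ m + d ∧ m ≤ n)) :
    ∫ z in Ioo (-1 : ℝ) 1, w' z * (P n).eval z * (Q m).eval z = 0 := by
  by_cases hmn : m ≤ n
  · have hdeg : (q * Q m).degree < n := by
      calc (q * Q m).degree ≤ q.degree + (Q m).degree := degree_mul_le _ _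
        _ ≤ d + m := by rw [hQ.1 m]; exact add_le_add_left hqd _
        _ < n := by exact_mod_cast (by omega : d + m < n)
    rw [← hP.integral_mul_eval_eq_zero_of_degree_lt hdeg]
    refine setIntegral_congr_fun measurableSet_Ioo fun z hz => ?_
    simp only [hw' z hz, eval_mul]
    ring
  · have hdeg : (P n).degree < m := by
      rw [hP.1 n]
      exact_mod_cast (by omega : n < m)
    rw [← hQ.integral_mul_eval_eq_zero_of_degree_lt hdeg]
    refine setIntegral_congr_fun measurableSet_Ioo fun z _ => ?_
    ring

end IsONPolys

section gjWeight

variable (a b : ℝ) {N : ℕ} (c : Fin N → ℝ) (p : Fin N → ℝ[X])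

theorem gjWeight_add_one_left {z : ℝ} (hz : z ∈ Ioo (-1 : ℝ) 1) :
    gjWeight (a + 1) b c p z = (1 - X : ℝ[X]).eval z * gjWeight a b c p z := by
  rw [gjWeight, gjWeight, Real.rpow_add_one (by linarith [hz.2])]
  simp only [eval_sub, eval_one, eval_X]
  ring

theorem gjWeight_add_one_right {z : ℝ} (hz : z ∈ Ioo (-1 : ℝ) 1) :
    gjWeight a (b + 1) c p z = (1 + X : ℝ[X]).eval z * gjWeight a b c p z := by
  rw [gjWeight, gjWeight, Real.rpow_add_one (by linarith [hz.1])]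
  simp only [eval_add, eval_one, eval_X]
  ring

theorem gjWeight_update_add_one (i : Fin N) {z : ℝ} (hz : (p i).eval z ≠ 0) :
    gjWeight a b (Function.update c i (c i + 1)) p z = (p i).eval z * gjWeight a b c p z := by
  simp only [gjWeight, ← Finset.mul_prod_erase _ _ (Finset.mem_univ i),
    Function.update_self, Real.rpow_add_one hz]
  rw [Finset.prod_congr rfl fun j hj => by rw [Function.update_of_ne (Finset.ne_of_mem_erase hj)]]
  ring

end gjWeight

theorem statement7_general (a b : ℝ) (N : ℕ) (c : Fin N → ℝ)
    (p : Fin N → Polynomial ℝ) (hp : ∀ i, ∀ z ∈ Set.Icc (-1 : ℝ) 1, 0 < (p i).eval z)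
    (P Pa Pb : ℕ → Polynomial ℝ) (Pc : Fin N → ℕ → Polynomial ℝ)
    (hP : IsONPolys (gjWeight a b c p) P)
    (hPa : IsONPolys (gjWeight (a + 1) b c p) Pa)
    (hPb : IsONPolys (gjWeight a (b + 1) c p) Pb)
    (hPc : ∀ i : Fin N,
      IsONPolys (gjWeight a b (Function.update c i (c i + 1)) p) (Pc i)) :
    (∀ n m : ℕ, ¬(n ≤ m + 1 ∧ m ≤ n) →
      (∫ z in Set.Ioo (-1 : ℝ) 1,
        gjWeight (a + 1) b c p z * (P n).eval z * (Pa m).eval z) = 0) ∧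
    (∀ n m : ℕ, ¬(n ≤ m + 1 ∧ m ≤ n) →
      (∫ z in Set.Ioo (-1 : ℝ) 1,
        gjWeight a (b + 1) c p z * (P n).eval z * (Pb m).eval z) = 0) ∧
    (∀ i : Fin N, ∀ n m : ℕ, ¬(n ≤ m + (p i).natDegree ∧ m ≤ n) →
      (∫ z in Set.Ioo (-1 : ℝ) 1,
        gjWeight a b (Function.update c i (c i + 1)) p z
          * (P n).eval z * (Pc i m).eval z) = 0) := by
  refine ⟨fun n m hnm => ?_, fun n m hnm => ?_, fun i n m hnm => ?_⟩
  · exact IsONPolys.integral_eq_zero_of_notMem_band (by compute_degree!)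
      (fun z hz => gjWeight_add_one_left a b c p hz) hP hPa hnm
  · exact IsONPolys.integral_eq_zero_of_notMem_band (by compute_degree!)
      (fun z hz => gjWeight_add_one_right a b c p hz) hP hPb hnm
  · exact IsONPolys.integral_eq_zero_of_notMem_band degree_le_natDegree
      (fun z hz => gjWeight_update_add_one a b c p i (hp i z (Ioo_subset_Icc_self hz)).ne')
      hP (hPc i) hnm

/-- The embedding operators between generalized Jacobi bases are banded with bandwidth one
more than the degree of the corresponding weight factor:  incrementing `a`, `b`, or `cᵢ`
gives matrix entries vanishing unless `n-1 ≤ m ≤ n`, resp. `n - deg pᵢ ≤ m ≤ n`. -/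
theorem statement7 (a b : ℝ) (ha : -1 < a) (hb : -1 < b) (N : ℕ) (c : Fin N → ℝ)
    (p : Fin N → Polynomial ℝ) (hp : ∀ i, ∀ z ∈ Set.Icc (-1 : ℝ) 1, 0 < (p i).eval z)
    (P Pa Pb : ℕ → Polynomial ℝ) (Pc : Fin N → ℕ → Polynomial ℝ)
    (hP : IsONPolys (gjWeight a b c p) P)
    (hPa : IsONPolys (gjWeight (a + 1) b c p) Pa)
    (hPb : IsONPolys (gjWeight a (b + 1) c p) Pb)
    (hPc : ∀ i : Fin N,
      IsONPolys (gjWeight a b (Function.update c i (c i + 1)) p) (Pc i)) :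
    (∀ n m : ℕ, ¬(n ≤ m + 1 ∧ m ≤ n) →
      (∫ z in Set.Ioo (-1 : ℝ) 1,
        gjWeight (a + 1) b c p z * (P n).eval z * (Pa m).eval z) = 0) ∧
    (∀ n m : ℕ, ¬(n ≤ m + 1 ∧ m ≤ n) →
      (∫ z in Set.Ioo (-1 : ℝ) 1,
        gjWeight a (b + 1) c p z * (P n).eval z * (Pb m).eval z) = 0) ∧
    (∀ i : Fin N, ∀ n m : ℕ, ¬(n ≤ m + (p i).natDegree ∧ m ≤ n) →
      (∫ z in Set.Ioo (-1 : ℝ) 1,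
        gjWeight a b (Function.update c i (c i + 1)) p z
          * (P n).eval z * (Pc i m).eval z) = 0) :=
  statement7_general a b N c p hp P Pa Pb Pc hP hPa hPb hPc
end

section
/- Let D = deg p₁ + ⋯ + deg p_N and write c+1⃗ for the exponent vector (c₁+1, …, c_N+1). Then the derivative operator is banded with bandwidth D+1 in the generalized Jacobi hierarchy: ∫_{−1}^{1} w^{(a+1,b+1,c+1⃗)}(z) · (d/dz P_n^{(a,b,c)})(z) · P_m^{(a+1,b+1,c+1⃗)}(z) dz = 0 unless n−1−D ≤ m ≤ n−1. -/
open MeasureTheory Polynomial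

/-!
If `n ≥ m + 2 + D`, integrate by parts: `w^{(a+1,b+1,c+1⃗)} = w^{(a,b,c)} · (1 - z²) ∏ pᵢ` vanishes
at `±1`, and its derivative is `w^{(a,b,c)}` times a polynomial of degree `≤ D + 1`. Hence
`∫ w^{(a+1,b+1,c+1⃗)} P_n' P'_m = -∫ w^{(a,b,c)} P_n H(P'_m)` for a polynomial `H(P'_m)` of degree
`≤ m + D + 1 < n`, which is orthogonal to `P_n`. If `n ≤ m`, then `deg P_n' < m` and `P'_m` is
orthogonal to `P_n'` directly.
-/

open Set

theorem integrableOn_one_sub_rpow_mul_one_add_rpow {a b : ℝ} (ha : -1 < a) (hb : -1 < b) :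
    IntegrableOn (fun z : ℝ => (1 - z) ^ a * (1 + z) ^ b) (Icc (-1) 1) := by
  have hleft : IntegrableOn (fun z : ℝ => (1 + z) ^ b) (Icc (-1) 0) := by
    have := (intervalIntegral.intervalIntegrable_rpow' hb (a := 0) (b := 1)).comp_add_left 1
    norm_num at this
    exact (intervalIntegrable_iff_integrableOn_Icc_of_le (by norm_num)).1 this
  have hright : IntegrableOn (fun z : ℝ => (1 - z) ^ a) (Icc 0 1) := by
    have := (intervalIntegral.intervalIntegrable_rpow' ha (a := 0) (b := 1)).comp_sub_left 1
    norm_num at this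
    exact (intervalIntegrable_iff_integrableOn_Icc_of_le (by norm_num)).1 this.symm
  rw [← Icc_union_Icc_eq_Icc (by norm_num : (-1 : ℝ) ≤ 0) zero_le_one]
  refine IntegrableOn.union ?_ ?_
  · refine hleft.continuousOn_mul (ContinuousOn.rpow_const (by fun_prop) ?_) isCompact_Icc
    exact fun z hz => Or.inl (by linarith [hz.2])
  · refine hright.mul_continuousOn (ContinuousOn.rpow_const (by fun_prop) ?_) isCompact_Icc
    exact fun z hz => Or.inl (by linarith [hz.1])

theorem continuousOn_prod_eval_rpow {N : ℕ} {p : Fin N → ℝ[X]}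
    (hp : ∀ i, ∀ z ∈ Icc (-1 : ℝ) 1, 0 < (p i).eval z) (c : Fin N → ℝ) :
    ContinuousOn (fun z => ∏ i, (p i).eval z ^ c i) (Icc (-1) 1) :=
  continuousOn_finsetProd _ fun i _ =>
    (p i).continuousOn.rpow_const fun z hz => Or.inl (hp i z hz).ne'

theorem continuousOn_gjWeight {a b : ℝ} (ha : 0 ≤ a) (hb : 0 ≤ b) {N : ℕ} (c : Fin N → ℝ)
    {p : Fin N → ℝ[X]} (hp : ∀ i, ∀ z ∈ Icc (-1 : ℝ) 1, 0 < (p i).eval z) :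
    ContinuousOn (gjWeight a b c p) (Icc (-1) 1) :=
  (((continuous_const.sub continuous_id).continuousOn.rpow_const fun _ _ => Or.inr ha).mul
    ((continuous_const.add continuous_id).continuousOn.rpow_const fun _ _ => Or.inr hb)).mul
    (continuousOn_prod_eval_rpow hp c)

theorem integrableOn_gjWeight_mul_eval {a b : ℝ} (ha : -1 < a) (hb : -1 < b) {N : ℕ}
    {c : Fin N → ℝ} {p : Fin N → ℝ[X]} (hp : ∀ i, ∀ z ∈ Icc (-1 : ℝ) 1, 0 < (p i).eval z)
    (q : ℝ[X]) :
    IntegrableOn (fun z => gjWeight a b c p z * q.eval z) (Ioo (-1) 1) := by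
  have := (integrableOn_one_sub_rpow_mul_one_add_rpow ha hb).mul_continuousOn
    ((continuousOn_prod_eval_rpow hp c).mul q.continuousOn) isCompact_Icc
  refine (this.mono_set Ioo_subset_Icc_self).congr_fun (fun z _ => ?_) measurableSet_Ioo
  simp only [gjWeight, Pi.mul_apply]
  ring

def IsONPolys.toSequence {w : ℝ → ℝ} {P : ℕ → ℝ[X]} (hP : IsONPolys w P) :
    Polynomial.Sequence ℝ :=
  ⟨P, hP.1⟩

theorem IsONPolys.integral_mul_eval_eq_zero_of_degree_lt_s8 {w : ℝ → ℝ} {P : ℕ → ℝ[X]}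
    (hP : IsONPolys w P)
    (hw : ∀ q : ℝ[X], IntegrableOn (fun z => w z * q.eval z) (Ioo (-1) 1))
    {q : ℝ[X]} {m : ℕ} (hq : q.degree < m) :
    ∫ z in Ioo (-1 : ℝ) 1, w z * q.eval z * (P m).eval z = 0 := by
  have hint : ∀ r : ℝ[X], IntegrableOn (fun z => w z * r.eval z * (P m).eval z) (Ioo (-1) 1) :=
    fun r => by simpa only [eval_mul, mul_assoc] using hw (r * P m)
  have hmem : q ∈ Submodule.span ℝ (P '' Iio m) := by
    rw [show P = hP.toSequence from rfl,
      hP.toSequence.span_degreeLT fun i _ => (hP.2.1 i).ne'.isUnit]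
    exact mem_degreeLT.2 hq
  clear hq
  induction hmem using Submodule.span_induction with
  | mem r hr =>
    obtain ⟨k, hk, rfl⟩ := hr
    rw [hP.2.2, if_neg (ne_of_lt hk)]
  | zero => simp
  | add r s _ _ hr hs =>
    simp only [eval_add, mul_add, add_mul]
    rw [integral_add (hint r) (hint s), hr, hs, add_zero]
  | smul x r _ hr =>
    simp only [eval_smul, smul_eq_mul]
    rw [← mul_zero x, ← hr, ← integral_const_mul]
    congr 1 with z
    ring

theorem Polynomial.natDegree_derivative_mul_le {R : Type*} [Semiring R] (q r : R[X]) :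
    (derivative q * r).natDegree ≤ q.natDegree + r.natDegree - 1 := by
  rcases eq_or_ne q.natDegree 0 with hq | hq
  · simp [derivative_of_natDegree_zero hq]
  · have := natDegree_derivative_le q
    have := natDegree_mul_le (p := derivative q) (q := r)
    omega

section GeneralizedJacobi

variable (a b : ℝ) {N : ℕ} (c : Fin N → ℝ) (p : Fin N → ℝ[X])

noncomputable def gjWeightRatio : ℝ[X] :=
  (1 - X) * (1 + X) * ∏ i, p i

noncomputable def gjWeightDerivRatio : ℝ[X] :=
  C (b + 1) * (1 - X) * ∏ i, p i - C (a + 1) * (1 + X) * ∏ i, p i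
    + ∑ i, derivative (p i) * (C (c i + 1) * (1 - X) * (1 + X) * ∏ j ∈ Finset.univ.erase i, p j)

noncomputable def gjDerivAdjoint (v : ℝ[X]) : ℝ[X] :=
  derivative v * gjWeightRatio p + gjWeightDerivRatio a b c p * v

theorem natDegree_gjWeightRatio_le :
    (gjWeightRatio p).natDegree ≤ ∑ i, (p i).natDegree + 2 := by
  have h : ((1 - X) * (1 + X) : ℝ[X]).natDegree ≤ 2 := by compute_degree!
  have := natDegree_prod_le (s := Finset.univ) (f := p)
  have := natDegree_mul_le (p := ((1 - X) * (1 + X) : ℝ[X])) (q := ∏ i, p i)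
  rw [gjWeightRatio]
  omega

theorem natDegree_gjWeightDerivRatio_le :
    (gjWeightDerivRatio a b c p).natDegree ≤ ∑ i, (p i).natDegree + 1 := by
  have hprod := natDegree_prod_le (s := Finset.univ) (f := p)
  have hsub : (C (b + 1) * (1 - X) : ℝ[X]).natDegree ≤ 1 := by compute_degree!
  have hadd : (C (a + 1) * (1 + X) : ℝ[X]).natDegree ≤ 1 := by compute_degree!
  have hterm : ∀ i, (derivative (p i) * (C (c i + 1) * (1 - X) * (1 + X)
      * ∏ j ∈ Finset.univ.erase i, p j)).natDegree ≤ ∑ i, (p i).natDegree + 1 := by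
    intro i
    have hquad : (C (c i + 1) * (1 - X) * (1 + X) : ℝ[X]).natDegree ≤ 2 := by compute_degree!
    have := natDegree_derivative_mul_le (p i)
      (C (c i + 1) * (1 - X) * (1 + X) * ∏ j ∈ Finset.univ.erase i, p j)
    have := natDegree_mul_le (p := C (c i + 1) * (1 - X) * (1 + X))
      (q := ∏ j ∈ Finset.univ.erase i, p j)
    have := natDegree_prod_le (s := Finset.univ.erase i) (f := p)
    have := Finset.add_sum_erase Finset.univ (fun j => (p j).natDegree) (Finset.mem_univ i)
    omega
  rw [gjWeightDerivRatio]
  refine (natDegree_add_le _ _).trans (max_le ((natDegree_sub_le _ _).trans (max_le ?_ ?_))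
    (natDegree_sum_le_of_forall_le _ _ fun i _ => hterm i))
  · exact natDegree_mul_le.trans (by omega)
  · exact natDegree_mul_le.trans (by omega)

theorem natDegree_gjDerivAdjoint_le (v : ℝ[X]) :
    (gjDerivAdjoint a b c p v).natDegree ≤ v.natDegree + ∑ i, (p i).natDegree + 1 := by
  have := natDegree_derivative_mul_le v (gjWeightRatio p)
  have := natDegree_gjWeightRatio_le p
  have := natDegree_mul_le (p := gjWeightDerivRatio a b c p) (q := v)
  have := natDegree_gjWeightDerivRatio_le a b c p
  have := natDegree_add_le (derivative v * gjWeightRatio p) (gjWeightDerivRatio a b c p * v)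
  rw [gjDerivAdjoint]
  omega

variable {a b c p}

theorem gjWeight_succ (hp : ∀ i, ∀ z ∈ Icc (-1 : ℝ) 1, 0 < (p i).eval z) {z : ℝ}
    (hz : z ∈ Ioo (-1 : ℝ) 1) :
    gjWeight (a + 1) (b + 1) (fun i => c i + 1) p z
      = gjWeight a b c p z * (gjWeightRatio p).eval z := by
  have hpz : ∀ i, (p i).eval z ≠ 0 := fun i => (hp i z (Ioo_subset_Icc_self hz)).ne'
  simp only [gjWeight, gjWeightRatio, eval_mul, eval_sub, eval_add, eval_one, eval_X,
    eval_prod, Real.rpow_add_one (by linarith [hz.2] : 1 - z ≠ 0),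
    Real.rpow_add_one (by linarith [hz.1] : 1 + z ≠ 0), Real.rpow_add_one (hpz _),
    Finset.prod_mul_distrib]
  ring

theorem hasDerivAt_gjWeight_succ (hp : ∀ i, ∀ z ∈ Icc (-1 : ℝ) 1, 0 < (p i).eval z)
    {z : ℝ} (hz : z ∈ Ioo (-1 : ℝ) 1) :
    HasDerivAt (gjWeight (a + 1) (b + 1) (fun i => c i + 1) p)
      (gjWeight a b c p z * (gjWeightDerivRatio a b c p).eval z) z := by
  have hpz : ∀ i, (p i).eval z ≠ 0 := fun i => (hp i z (Ioo_subset_Icc_self hz)).ne'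
  have h1 : 1 - z ≠ 0 := by linarith [hz.2]
  have h2 : 1 + z ≠ 0 := by linarith [hz.1]
  have d1 : HasDerivAt (fun z : ℝ => (1 - z) ^ (a + 1)) (-1 * (a + 1) * (1 - z) ^ a) z := by
    simpa using ((hasDerivAt_id z).const_sub 1).rpow_const (p := a + 1) (Or.inl h1)
  have d2 : HasDerivAt (fun z : ℝ => (1 + z) ^ (b + 1)) (1 * (b + 1) * (1 + z) ^ b) z := by
    simpa using ((hasDerivAt_id z).const_add 1).rpow_const (p := b + 1) (Or.inl h2)
  have d3 := HasDerivAt.fun_finsetProd (u := Finset.univ) fun i _ =>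
    ((p i).hasDerivAt z).rpow_const (p := c i + 1) (Or.inl (hpz i))
  refine ((d1.mul d2).mul d3).congr_deriv ?_
  simp only [smul_eq_mul, add_sub_cancel_right, Pi.mul_apply, gjWeight, gjWeightDerivRatio,
    eval_add, eval_sub, eval_mul, eval_one, eval_X, eval_C, eval_prod, eval_finsetSum,
    Real.rpow_add_one h1, Real.rpow_add_one h2, Real.rpow_add_one (hpz _),
    Finset.prod_mul_distrib]
  have hsum : ∑ i, ((∏ j ∈ Finset.univ.erase i, (p j).eval z ^ c j)
        * ∏ j ∈ Finset.univ.erase i, (p j).eval z)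
        * ((derivative (p i)).eval z * (c i + 1) * (p i).eval z ^ c i)
      = (∏ i, (p i).eval z ^ c i) * ∑ i, (derivative (p i)).eval z
          * ((c i + 1) * ∏ j ∈ Finset.univ.erase i, (p j).eval z) := by
    rw [Finset.mul_sum]
    refine Finset.sum_congr rfl fun i _ => ?_
    rw [← Finset.prod_erase_mul Finset.univ (fun j => (p j).eval z ^ c j) (Finset.mem_univ i)]
    ring
  have hsum' : ∑ i, (derivative (p i)).eval z
        * ((c i + 1) * (1 - z) * (1 + z) * ∏ j ∈ Finset.univ.erase i, (p j).eval z)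
      = (1 - z) * (1 + z) * ∑ i, (derivative (p i)).eval z
          * ((c i + 1) * ∏ j ∈ Finset.univ.erase i, (p j).eval z) := by
    rw [Finset.mul_sum]
    exact Finset.sum_congr rfl fun i _ => by ring
  rw [hsum, hsum']
  ring

theorem integral_gjWeight_succ_mul_derivative (ha : -1 < a) (hb : -1 < b)
    (hp : ∀ i, ∀ z ∈ Icc (-1 : ℝ) 1, 0 < (p i).eval z) (u v : ℝ[X]) :
    ∫ z in Ioo (-1 : ℝ) 1,
        gjWeight (a + 1) (b + 1) (fun i => c i + 1) p z * (derivative u).eval z * v.eval z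
      = -∫ z in Ioo (-1 : ℝ) 1,
          gjWeight a b c p z * (gjDerivAdjoint a b c p v).eval z * u.eval z := by
  have hf : IntegrableOn
      (fun z => gjWeight a b c p z * (gjDerivAdjoint a b c p v).eval z * u.eval z)
      (Ioo (-1) 1) := by
    simpa only [eval_mul, mul_assoc] using
      integrableOn_gjWeight_mul_eval ha hb hp (gjDerivAdjoint a b c p v * u)
  have hg : IntegrableOn
      (fun z => gjWeight (a + 1) (b + 1) (fun i => c i + 1) p z * (derivative u).eval z
        * v.eval z) (Ioo (-1) 1) := by
    simpa only [eval_mul, mul_assoc] using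
      integrableOn_gjWeight_mul_eval (a := a + 1) (b := b + 1) (c := fun i => c i + 1)
        (by linarith) (by linarith) hp (derivative u * v)
  set f := fun z => gjWeight a b c p z * (gjDerivAdjoint a b c p v).eval z * u.eval z
  set g := fun z =>
    gjWeight (a + 1) (b + 1) (fun i => c i + 1) p z * (derivative u).eval z * v.eval z
  set F := fun z => gjWeight (a + 1) (b + 1) (fun i => c i + 1) p z * u.eval z * v.eval z
  have hF : ∀ z ∈ Ioo (-1 : ℝ) 1, HasDerivAt F (f z + g z) z := by
    intro z hz
    refine (((hasDerivAt_gjWeight_succ hp hz).mul (u.hasDerivAt z)).mul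
      (v.hasDerivAt z)).congr_deriv ?_
    simp only [f, g, gjDerivAdjoint, eval_add, eval_mul, Pi.mul_apply, gjWeight_succ hp hz]
    ring
  have hF_cont : ContinuousOn F (Icc (-1) 1) :=
    ((continuousOn_gjWeight (by linarith) (by linarith) _ hp).mul u.continuousOn).mul
      v.continuousOn
  have hF_one : F 1 = 0 := by
    simp [F, gjWeight, Real.zero_rpow (by linarith : a + 1 ≠ 0)]
  have hF_neg_one : F (-1) = 0 := by
    simp [F, gjWeight, Real.zero_rpow (by linarith : b + 1 ≠ 0)]
  have hFTC := intervalIntegral.integral_eq_sub_of_hasDerivAt_of_le (by norm_num) hF_cont hF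
    ((intervalIntegrable_iff_integrableOn_Ioo_of_le (by norm_num)).2 (hf.add hg))
  rw [intervalIntegral.integral_of_le (by norm_num), integral_Ioc_eq_integral_Ioo,
    integral_add hf hg, hF_one, hF_neg_one, sub_zero] at hFTC
  linarith

end GeneralizedJacobi

/-- The derivative operator is banded with bandwidth `D+1` in the generalized Jacobi
hierarchy, where `D = Σᵢ deg pᵢ`:  the matrix entry of `d/dz` from the `(a,b,c)` basis to
the `(a+1,b+1,c+1⃗)` basis vanishes unless `n-1-D ≤ m ≤ n-1`. -/
theorem statement8 (a b : ℝ) (ha : -1 < a) (hb : -1 < b) (N : ℕ) (c : Fin N → ℝ)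
    (p : Fin N → Polynomial ℝ) (hp : ∀ i, ∀ z ∈ Set.Icc (-1 : ℝ) 1, 0 < (p i).eval z)
    (P P' : ℕ → Polynomial ℝ)
    (hP : IsONPolys (gjWeight a b c p) P)
    (hP' : IsONPolys (gjWeight (a + 1) (b + 1) (fun i => c i + 1) p) P')
    (D : ℕ) (hD : D = ∑ i, (p i).natDegree) :
    ∀ n m : ℕ, ¬(n ≤ m + 1 + D ∧ m + 1 ≤ n) →
      (∫ z in Set.Ioo (-1 : ℝ) 1,
        gjWeight (a + 1) (b + 1) (fun i => c i + 1) p z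
          * (Polynomial.derivative (P n)).eval z * (P' m).eval z) = 0 := by
  intro n m hnm
  by_cases hmn : m + 1 ≤ n
  · have hdeg : (gjDerivAdjoint a b c p (P' m)).degree < n := by
      have := natDegree_gjDerivAdjoint_le a b c p (P' m)
      rw [natDegree_eq_of_degree_eq_some (hP'.1 m)] at this
      exact degree_le_natDegree.trans_lt (by exact_mod_cast (by omega : _ < n))
    rw [integral_gjWeight_succ_mul_derivative ha hb hp,
      hP.integral_mul_eval_eq_zero_of_degree_lt_s8 (integrableOn_gjWeight_mul_eval ha hb hp) hdeg,
      neg_zero]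
  · have hdeg : (derivative (P n)).degree < m := by
      refine (degree_derivative_lt (hP.toSequence.ne_zero n)).trans_le ?_
      rw [hP.toSequence.degree_eq n]
      exact_mod_cast (by omega : n ≤ m)
    exact hP'.integral_mul_eval_eq_zero_of_degree_lt_s8
      (integrableOn_gjWeight_mul_eval (by linarith) (by linarith) hp) hdeg
end

section
/- The cylinder gyroscopic basis functions are orthonormal with respect to the weighted measure dμ(α): for all integers m, m′ with |m|+σ ≥ 0 and |m′|+σ ≥ 0 and all l, l′, k, k′ ∈ ℕ, ⟨Φ_{m,l,k}^{(α,σ)}, Φ_{m′,l′,k′}^{(α,σ)}⟩_{dμ(α)} = δ_{mm′} δ_{ll′} δ_{kk′}. -/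
open MeasureTheory Polynomial

/-!
The integrand separates in `φ`, `η` and `t`. Over a period, `conj (e^{imφ}) e^{im'φ}` integrates
to `2π δ_{mm'}`. For `m = m'` the `η`-integral is the orthonormality of the `P_l`, giving `δ_{ll'}`.
For `l = l'` as well, the two factors `(1+t)^{(|m|+σ)/2} h̃(t)^l` merge with `(1-t)^α h̃(t)^{2α+1}`
into exactly the weight `(1-t)^α (1+t)^{|m|+σ} h̃(t)^{2l+2α+1}` of the `Q_k`, whose orthonormality
gives `δ_{kk'}`. Every step rewrites an iterated integral pointwise, so no integrability is needed.
-/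

section Fourier

open Complex

theorem integral_Ico_exp_I_mul_intCast (n : ℤ) :
    ∫ φ in Set.Ico (0 : ℝ) (2 * Real.pi), exp (I * n * φ) =
      if n = 0 then (2 * Real.pi : ℂ) else 0 := by
  rw [integral_Ico_eq_integral_Ioo, ← integral_Ioc_eq_integral_Ioo,
    ← intervalIntegral.integral_of_le Real.two_pi_pos.le]
  split_ifs with hn
  · simp [hn]
  · have hc : I * n ≠ 0 := by simp [hn]
    have h_period : exp (I * n * (2 * Real.pi)) = 1 := by
      rw [← exp_int_mul_two_pi_mul_I n]; ring_nf
    simp [integral_exp_mul_complex hc, h_period]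

theorem conj_exp_I_mul_mul_exp_I_mul (m m' : ℤ) (φ : ℝ) :
    starRingEnd ℂ (exp (I * m * φ)) * exp (I * m' * φ) = exp (I * (m' - m : ℤ) * φ) := by
  rw [← exp_conj, ← exp_add]
  congr 1
  simp only [map_mul, conj_I, map_intCast, conj_ofReal]
  push_cast
  ring

theorem integral_Ico_mul_conj_exp_mul_exp (m m' : ℤ) (c : ℂ) :
    ∫ φ in Set.Ico (0 : ℝ) (2 * Real.pi),
        c * starRingEnd ℂ (exp (I * m * φ)) * exp (I * m' * φ) =
      if m = m' then 2 * Real.pi * c else 0 := by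
  simp_rw [mul_assoc c, conj_exp_I_mul_mul_exp_I_mul, integral_const_mul,
    integral_Ico_exp_I_mul_intCast, sub_eq_zero, eq_comm (a := m')]
  split_ifs <;> ring

theorem integral_Ico_ofReal_mul_conj_mul (m m' : ℤ) (w a b : ℝ) :
    ∫ φ in Set.Ico (0 : ℝ) (2 * Real.pi),
        (w : ℂ) * starRingEnd ℂ (exp (I * m * φ) * a) * (exp (I * m' * φ) * b) =
      if m = m' then 2 * Real.pi * ((w * a * b : ℝ) : ℂ) else 0 := by
  rw [← integral_Ico_mul_conj_exp_mul_exp]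
  congr 1 with φ
  simp only [map_mul, conj_ofReal]
  push_cast
  ring

end Fourier

theorem Real.rpow_half_mul_rpow_half {x : ℝ} (hx : 0 < x) (s : ℝ) :
    x ^ (s / 2) * x ^ (s / 2) = x ^ s := by
  rw [← Real.rpow_add hx, add_halves]

theorem Real.rpow_mul_pow_mul_pow {y : ℝ} (hy : 0 < y) (β : ℝ) (n : ℕ) :
    y ^ β * (y ^ n * y ^ n) = y ^ (2 * (n : ℝ) + β) := by
  rw [← Real.rpow_natCast, ← Real.rpow_add hy, ← Real.rpow_add hy]
  ring_nf

theorem integral_Ioo_Ioo_warped_product_orthonormal {α s : ℝ} {w : ℝ → ℝ}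
    (hw : ∀ t ∈ Set.Ioo (-1 : ℝ) 1, 0 < w t) {p : ℕ → ℝ → ℝ}
    (hp : ∀ l l', ∫ η in Set.Ioo (-1 : ℝ) 1, (1 - η ^ 2) ^ α * p l η * p l' η =
      if l = l' then (1 : ℝ) else 0)
    {q : ℕ → ℕ → ℝ → ℝ}
    (hq : ∀ l j k : ℕ, ∫ t in Set.Ioo (-1 : ℝ) 1,
        (1 - t) ^ α * (1 + t) ^ s * w t ^ (2 * (l : ℝ) + 2 * α + 1) * q l j t * q l k t =
      if j = k then (1 : ℝ) else 0)
    (l l' k k' : ℕ) :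
    ∫ t in Set.Ioo (-1 : ℝ) 1, ∫ η in Set.Ioo (-1 : ℝ) 1,
        ((1 - η ^ 2) ^ α * (1 - t) ^ α * w t ^ (2 * α + 1)) *
          ((1 + t) ^ (s / 2) * w t ^ l * p l η * q l k t) *
          ((1 + t) ^ (s / 2) * w t ^ l' * p l' η * q l' k' t) =
      if l = l' ∧ k = k' then (1 : ℝ) else 0 := by
  set C : ℝ → ℝ := fun t => (1 - t) ^ α * w t ^ (2 * α + 1) *
    ((1 + t) ^ (s / 2) * w t ^ l * q l k t) * ((1 + t) ^ (s / 2) * w t ^ l' * q l' k' t)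
  have h_inner : ∀ t, ∫ η in Set.Ioo (-1 : ℝ) 1,
      ((1 - η ^ 2) ^ α * (1 - t) ^ α * w t ^ (2 * α + 1)) *
        ((1 + t) ^ (s / 2) * w t ^ l * p l η * q l k t) *
        ((1 + t) ^ (s / 2) * w t ^ l' * p l' η * q l' k' t) =
      C t * if l = l' then 1 else 0 := by
    intro t
    rw [← hp, ← integral_const_mul]
    congr 1 with η
    ring
  simp_rw [h_inner]
  by_cases hl : l = l'
  · subst hl
    simp only [if_true, mul_one, true_and]
    rw [← hq]
    refine setIntegral_congr_fun measurableSet_Ioo fun t ht => ?_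
    have hx : 0 < 1 + t := by linarith [ht.1]
    calc C t = (1 - t) ^ α * ((1 + t) ^ (s / 2) * (1 + t) ^ (s / 2)) *
          (w t ^ (2 * α + 1) * (w t ^ l * w t ^ l)) * q l k t * q l k' t := by ring
      _ = _ := by
        rw [Real.rpow_half_mul_rpow_half hx, Real.rpow_mul_pow_mul_pow (hw t ht), ← add_assoc]
  · simp [hl]

theorem statement11_general
    (h : Polynomial ℝ) (hpos : ∀ t ∈ Set.Icc (-1 : ℝ) 1, 0 < h.eval t)
    (α : ℝ) (σ : ℤ)
    (P : ℕ → Polynomial ℝ)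
    (hPorth : ∀ l l', (∫ η in Set.Ioo (-1 : ℝ) 1,
        (1 - η ^ 2) ^ α * (P l).eval η * (P l').eval η)
      = if l = l' then (1 : ℝ) else 0)
    (Q : ℤ → ℕ → ℕ → Polynomial ℝ)
    (hQorth : ∀ m : ℤ, 0 ≤ |m| + σ → ∀ l j k : ℕ,
      (∫ t in Set.Ioo (-1 : ℝ) 1,
        (1 - t) ^ α * (1 + t) ^ ((|m| + σ : ℤ) : ℝ) * h.eval t ^ (2 * (l : ℝ) + 2 * α + 1)
          * (Q m l j).eval t * (Q m l k).eval t)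
      = if j = k then (1 : ℝ) else 0)
    (Φ : ℤ → ℕ → ℕ → ℝ → ℝ → ℝ → ℂ)
    (hΦ : ∀ m l k t φ η, Φ m l k t φ η =
      Complex.exp (Complex.I * m * φ) *
        (((1 + t) ^ (((|m| + σ : ℤ) : ℝ) / 2) * h.eval t ^ l
          * (P l).eval η * (Q m l k).eval t : ℝ) : ℂ)) :
    ∀ m m' : ℤ, 0 ≤ |m| + σ → 0 ≤ |m'| + σ → ∀ l l' k k' : ℕ,
      (2 * Real.pi : ℂ)⁻¹ *
        (∫ t in Set.Ioo (-1 : ℝ) 1, ∫ η in Set.Ioo (-1 : ℝ) 1,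
          ∫ φ in Set.Ico (0 : ℝ) (2 * Real.pi),
            (((1 - η ^ 2) ^ α * (1 - t) ^ α * h.eval t ^ (2 * α + 1) : ℝ) : ℂ)
              * (starRingEnd ℂ) (Φ m l k t φ η) * Φ m' l' k' t φ η)
      = if m = m' ∧ l = l' ∧ k = k' then (1 : ℂ) else 0 := by
  intro m m' hm _ l l' k k'
  simp_rw [hΦ, integral_Ico_ofReal_mul_conj_mul]
  by_cases hmm : m = m'
  · subst hmm
    have h_radial := integral_Ioo_Ioo_warped_product_orthonormal
      (fun t ht => hpos t (Set.Ioo_subset_Icc_self ht)) hPorth (hQorth m hm) l l' k k'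
    simp only [if_true, true_and, integral_const_mul, integral_complex_ofReal]
    rw [h_radial]
    split_ifs <;> push_cast <;> field_simp
  · simp [hmm]

/-- Orthonormality of the cylinder gyroscopic basis functions
`Φ_{m,l,k}^{(α,σ)}(t,φ,η) = e^{imφ} (1+t)^{(|m|+σ)/2} h̃(t)^l P_l^{(α,α)}(η)
Q_k^{(α,|m|+σ,2l+2α+1)}(t)` with respect to the weighted measure `dμ(α)`. -/
theorem statement11
    (h : Polynomial ℝ) (hpos : ∀ t ∈ Set.Icc (-1 : ℝ) 1, 0 < h.eval t)
    (α : ℝ) (hα : -1 < α) (σ : ℤ) (hσ : σ = -1 ∨ σ = 0 ∨ σ = 1)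
    (P : ℕ → Polynomial ℝ)
    (hPdeg : ∀ l, (P l).degree = l) (hPlead : ∀ l, 0 < (P l).leadingCoeff)
    (hPorth : ∀ l l', (∫ η in Set.Ioo (-1 : ℝ) 1,
        (1 - η ^ 2) ^ α * (P l).eval η * (P l').eval η)
      = if l = l' then (1 : ℝ) else 0)
    (Q : ℤ → ℕ → ℕ → Polynomial ℝ)
    (hQdeg : ∀ m l k, (Q m l k).degree = k) (hQlead : ∀ m l k, 0 < (Q m l k).leadingCoeff)
    (hQorth : ∀ m : ℤ, 0 ≤ |m| + σ → ∀ l j k : ℕ,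
      (∫ t in Set.Ioo (-1 : ℝ) 1,
        (1 - t) ^ α * (1 + t) ^ ((|m| + σ : ℤ) : ℝ) * h.eval t ^ (2 * (l : ℝ) + 2 * α + 1)
          * (Q m l j).eval t * (Q m l k).eval t)
      = if j = k then (1 : ℝ) else 0)
    (Φ : ℤ → ℕ → ℕ → ℝ → ℝ → ℝ → ℂ)
    (hΦ : ∀ m l k t φ η, Φ m l k t φ η =
      Complex.exp (Complex.I * m * φ) *
        (((1 + t) ^ (((|m| + σ : ℤ) : ℝ) / 2) * h.eval t ^ l
          * (P l).eval η * (Q m l k).eval t : ℝ) : ℂ)) :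
    ∀ m m' : ℤ, 0 ≤ |m| + σ → 0 ≤ |m'| + σ → ∀ l l' k k' : ℕ,
      (2 * Real.pi : ℂ)⁻¹ *
        (∫ t in Set.Ioo (-1 : ℝ) 1, ∫ η in Set.Ioo (-1 : ℝ) 1,
          ∫ φ in Set.Ico (0 : ℝ) (2 * Real.pi),
            (((1 - η ^ 2) ^ α * (1 - t) ^ α * h.eval t ^ (2 * α + 1) : ℝ) : ℂ)
              * (starRingEnd ℂ) (Φ m l k t φ η) * Φ m' l' k' t φ η)
      = if m = m' ∧ l = l' ∧ k = k' then (1 : ℂ) else 0 :=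
  statement11_general h hpos α σ P hPorth Q hQorth Φ hΦ
end

section
/- The annulus gyroscopic basis functions are orthonormal with respect to the weighted measure dμ(α): for all integers m, m′ with |m|+σ ≥ 0 and |m′|+σ ≥ 0 and all l, l′, k, k′ ∈ ℕ, ⟨Υ_{m,l,k}^{(α,σ)}, Υ_{m′,l′,k′}^{(α,σ)}⟩_{dμ(α)} = δ_{mm′} δ_{ll′} δ_{kk′}. -/
open MeasureTheory Polynomial

/-!
The integrand factors as (a function of `t`) · (a function of `η`) · `conj (e^{imφ}) e^{im'φ}`,
and an iterated integral of such a product is the product of the three integrals with no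
integrability needed, since each inner integral only pulls out a constant factor.
The `φ`-integral is `2π δ_{mm'}`, the `η`-integral is `δ_{ll'}` by orthonormality of `P`, and for
`m = m'`, `l = l'` the weight `(1 - t²)^α h̃^{2α+1}` times the two radial factors
`s̃^{(|m|+σ)/2} h̃^l` is exactly the weight that makes the `Q_k` orthonormal.
-/

lemma integral_integral_integral_mul {X Y Z : Type*} [MeasurableSpace X] [MeasurableSpace Y]
    [MeasurableSpace Z] (μ : Measure X) (ν : Measure Y) (ρ : Measure Z)
    (F : X → ℂ) (G : Y → ℂ) (H : Z → ℂ) :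
    ∫ x, ∫ y, ∫ z, F x * G y * H z ∂ρ ∂ν ∂μ = (∫ x, F x ∂μ) * (∫ y, G y ∂ν) * ∫ z, H z ∂ρ := by
  simp only [integral_const_mul, integral_mul_const]

lemma integral_Ico_conj_exp_mul_exp (m m' : ℤ) :
    ∫ φ in Set.Ico (0 : ℝ) (2 * Real.pi),
        (starRingEnd ℂ) (Complex.exp (Complex.I * m * φ)) * Complex.exp (Complex.I * m' * φ)
      = if m = m' then (2 * Real.pi : ℂ) else 0 := by
  have hmode : ∀ φ : ℝ,
      (starRingEnd ℂ) (Complex.exp (Complex.I * m * φ)) * Complex.exp (Complex.I * m' * φ)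
        = Complex.exp (Complex.I * ((m' - m : ℤ) : ℂ) * φ) := by
    intro φ
    rw [← Complex.exp_conj, ← Complex.exp_add]
    simp only [map_mul, Complex.conj_I, map_intCast, Complex.conj_ofReal]
    push_cast; ring_nf
  simp_rw [hmode]
  rw [integral_Ico_eq_integral_Ioo, ← integral_Ioc_eq_integral_Ioo,
    ← intervalIntegral.integral_of_le Real.two_pi_pos.le]
  by_cases hmm : m = m'
  · simp [hmm]
  · have hc : Complex.I * ((m' - m : ℤ) : ℂ) ≠ 0 :=
      mul_ne_zero Complex.I_ne_zero (Int.cast_ne_zero.mpr (sub_ne_zero.mpr (Ne.symm hmm)))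
    rw [integral_exp_mul_complex hc, if_neg hmm]
    have hperiod : Complex.I * ((m' - m : ℤ) : ℂ) * ((2 * Real.pi : ℝ) : ℂ)
        = ((m' - m : ℤ) : ℂ) * (2 * Real.pi * Complex.I) := by
      push_cast; ring
    rw [hperiod, Complex.exp_int_mul_two_pi_mul_I]
    simp

lemma rpow_div_two_mul_rpow_div_two {s : ℝ} (hs : 0 ≤ s) (e : ℝ) :
    s ^ (e / 2) * s ^ (e / 2) = s ^ e := by
  rw [← sq, ← Real.rpow_natCast, ← Real.rpow_mul hs]
  norm_num

lemma one_sub_sq_rpow {t : ℝ} (ht : t ∈ Set.Icc (-1 : ℝ) 1) (α : ℝ) :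
    (1 - t ^ 2) ^ α = (1 - t) ^ α * (1 + t) ^ α := by
  rw [show 1 - t ^ 2 = (1 - t) * (1 + t) by ring,
    Real.mul_rpow (by linarith [ht.2]) (by linarith [ht.1])]

lemma weight_mul_radial_mul_radial {t a s : ℝ} (ht : t ∈ Set.Icc (-1 : ℝ) 1) (ha : 0 < a)
    (hs : 0 ≤ s) (α e q₁ q₂ : ℝ) (l : ℕ) :
    (1 - t ^ 2) ^ α * a ^ (2 * α + 1) * (s ^ (e / 2) * a ^ l * q₁) * (s ^ (e / 2) * a ^ l * q₂)
      = (1 - t) ^ α * (1 + t) ^ α * a ^ (2 * (l : ℝ) + 2 * α + 1) * s ^ e * q₁ * q₂ := by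
  have hpow : a ^ (2 * α + 1) * (a ^ l * a ^ l) = a ^ (2 * (l : ℝ) + 2 * α + 1) := by
    rw [← Real.rpow_natCast, ← Real.rpow_add ha, ← Real.rpow_add ha]
    ring_nf
  calc _ = (1 - t ^ 2) ^ α * (a ^ (2 * α + 1) * (a ^ l * a ^ l))
        * (s ^ (e / 2) * s ^ (e / 2)) * q₁ * q₂ := by ring
    _ = _ := by rw [hpow, rpow_div_two_mul_rpow_div_two hs, one_sub_sq_rpow ht]

theorem statement12_general
    (h : Polynomial ℝ) (hpos : ∀ t ∈ Set.Icc (-1 : ℝ) 1, 0 < h.eval t)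
    (Si So : ℝ)
    (α : ℝ) (σ : ℤ)
    (s2 : ℝ → ℝ) (hs2 : ∀ t, s2 t = Si ^ 2 * (1 - t) + So ^ 2 * (1 + t))
    (P : ℕ → Polynomial ℝ)
    (hPorth : ∀ l l', (∫ η in Set.Ioo (-1 : ℝ) 1,
        (1 - η ^ 2) ^ α * (P l).eval η * (P l').eval η)
      = if l = l' then (1 : ℝ) else 0)
    (Q : ℤ → ℕ → ℕ → Polynomial ℝ)
    (hQorth : ∀ m : ℤ, 0 ≤ |m| + σ → ∀ l j k : ℕ,
      (∫ t in Set.Ioo (-1 : ℝ) 1,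
        (1 - t) ^ α * (1 + t) ^ α * h.eval t ^ (2 * (l : ℝ) + 2 * α + 1)
          * s2 t ^ ((|m| + σ : ℤ) : ℝ)
          * (Q m l j).eval t * (Q m l k).eval t)
      = if j = k then (1 : ℝ) else 0)
    (Υ : ℤ → ℕ → ℕ → ℝ → ℝ → ℝ → ℂ)
    (hΥ : ∀ m l k t φ η, Υ m l k t φ η =
      Complex.exp (Complex.I * m * φ) *
        ((s2 t ^ (((|m| + σ : ℤ) : ℝ) / 2) * h.eval t ^ l
          * (P l).eval η * (Q m l k).eval t : ℝ) : ℂ)) :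
    ∀ m m' : ℤ, 0 ≤ |m| + σ → 0 ≤ |m'| + σ → ∀ l l' k k' : ℕ,
      (2 * Real.pi : ℂ)⁻¹ *
        (∫ t in Set.Ioo (-1 : ℝ) 1, ∫ η in Set.Ioo (-1 : ℝ) 1,
          ∫ φ in Set.Ico (0 : ℝ) (2 * Real.pi),
            (((1 - η ^ 2) ^ α * (1 - t ^ 2) ^ α * h.eval t ^ (2 * α + 1) : ℝ) : ℂ)
              * (starRingEnd ℂ) (Υ m l k t φ η) * Υ m' l' k' t φ η)
      = if m = m' ∧ l = l' ∧ k = k' then (1 : ℂ) else 0 := by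
  intro m m' hm _ l l' k k'
  set R : ℤ → ℕ → ℕ → ℝ → ℝ := fun m l k t =>
    s2 t ^ (((|m| + σ : ℤ) : ℝ) / 2) * h.eval t ^ l * (Q m l k).eval t
  have hseparate : ∀ t η φ : ℝ,
      (((1 - η ^ 2) ^ α * (1 - t ^ 2) ^ α * h.eval t ^ (2 * α + 1) : ℝ) : ℂ)
          * (starRingEnd ℂ) (Υ m l k t φ η) * Υ m' l' k' t φ η
        = (((1 - t ^ 2) ^ α * h.eval t ^ (2 * α + 1) * R m l k t * R m' l' k' t : ℝ) : ℂ)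
          * (((1 - η ^ 2) ^ α * (P l).eval η * (P l').eval η : ℝ) : ℂ)
          * ((starRingEnd ℂ) (Complex.exp (Complex.I * m * φ))
            * Complex.exp (Complex.I * m' * φ)) := by
    intro t η φ
    simp only [hΥ, R, map_mul, Complex.conj_ofReal, Complex.ofReal_mul]
    ring
  simp_rw [hseparate]
  rw [integral_integral_integral_mul, integral_complex_ofReal, integral_complex_ofReal, hPorth,
    integral_Ico_conj_exp_mul_exp]
  have hradial : ∫ t in Set.Ioo (-1 : ℝ) 1,
      (1 - t ^ 2) ^ α * h.eval t ^ (2 * α + 1) * R m l k t * R m l k' t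
        = if k = k' then 1 else 0 := by
    rw [← hQorth m hm l k k']
    refine setIntegral_congr_fun measurableSet_Ioo fun t ht => ?_
    have ht' : t ∈ Set.Icc (-1 : ℝ) 1 := Set.Ioo_subset_Icc_self ht
    have hs2_nonneg : 0 ≤ s2 t := by
      rw [hs2]; nlinarith [sq_nonneg Si, sq_nonneg So, ht'.1, ht'.2]
    exact weight_mul_radial_mul_radial ht' (hpos t ht') hs2_nonneg _ _ _ _ l
  by_cases hmm : m = m'
  · by_cases hll : l = l'
    · subst hmm hll
      rw [hradial]
      by_cases hkk : k = k' <;> simp [hkk]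
      field_simp
    · simp [hmm, hll]
  · simp [hmm]

/-- Orthonormality of the annulus gyroscopic basis functions
`Υ_{m,l,k}^{(α,σ)}(t,φ,η) = e^{imφ} (s̃²(t))^{(|m|+σ)/2} h̃(t)^l P_l^{(α,α)}(η)
Q_k^{(α,2l+2α+1,|m|+σ)}(t)` with respect to the weighted measure `dμ(α)`, where
`s̃²(t) = S_i²(1-t) + S_o²(1+t)`. -/
theorem statement12
    (h : Polynomial ℝ) (hpos : ∀ t ∈ Set.Icc (-1 : ℝ) 1, 0 < h.eval t)
    (Si So : ℝ) (hSi : 0 < Si) (hSiSo : Si < So)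
    (α : ℝ) (hα : -1 < α) (σ : ℤ) (hσ : σ = -1 ∨ σ = 0 ∨ σ = 1)
    (s2 : ℝ → ℝ) (hs2 : ∀ t, s2 t = Si ^ 2 * (1 - t) + So ^ 2 * (1 + t))
    (P : ℕ → Polynomial ℝ)
    (hPdeg : ∀ l, (P l).degree = l) (hPlead : ∀ l, 0 < (P l).leadingCoeff)
    (hPorth : ∀ l l', (∫ η in Set.Ioo (-1 : ℝ) 1,
        (1 - η ^ 2) ^ α * (P l).eval η * (P l').eval η)
      = if l = l' then (1 : ℝ) else 0)
    (Q : ℤ → ℕ → ℕ → Polynomial ℝ)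
    (hQdeg : ∀ m l k, (Q m l k).degree = k) (hQlead : ∀ m l k, 0 < (Q m l k).leadingCoeff)
    (hQorth : ∀ m : ℤ, 0 ≤ |m| + σ → ∀ l j k : ℕ,
      (∫ t in Set.Ioo (-1 : ℝ) 1,
        (1 - t) ^ α * (1 + t) ^ α * h.eval t ^ (2 * (l : ℝ) + 2 * α + 1)
          * s2 t ^ ((|m| + σ : ℤ) : ℝ)
          * (Q m l j).eval t * (Q m l k).eval t)
      = if j = k then (1 : ℝ) else 0)
    (Υ : ℤ → ℕ → ℕ → ℝ → ℝ → ℝ → ℂ)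
    (hΥ : ∀ m l k t φ η, Υ m l k t φ η =
      Complex.exp (Complex.I * m * φ) *
        ((s2 t ^ (((|m| + σ : ℤ) : ℝ) / 2) * h.eval t ^ l
          * (P l).eval η * (Q m l k).eval t : ℝ) : ℂ)) :
    ∀ m m' : ℤ, 0 ≤ |m| + σ → 0 ≤ |m'| + σ → ∀ l l' k k' : ℕ,
      (2 * Real.pi : ℂ)⁻¹ *
        (∫ t in Set.Ioo (-1 : ℝ) 1, ∫ η in Set.Ioo (-1 : ℝ) 1,
          ∫ φ in Set.Ico (0 : ℝ) (2 * Real.pi),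
            (((1 - η ^ 2) ^ α * (1 - t ^ 2) ^ α * h.eval t ^ (2 * α + 1) : ℝ) : ℂ)
              * (starRingEnd ℂ) (Υ m l k t φ η) * Υ m' l' k' t φ η)
      = if m = m' ∧ l = l' ∧ k = k' then (1 : ℂ) else 0 :=
  statement12_general h hpos Si So α σ s2 hs2 P hPorth Q hQorth Υ hΥ
end

section
/- For α = 0 the annulus gyroscopic basis functions converge pointwise to the cylinder gyroscopic basis functions as the inner radius shrinks to zero: for every (t,φ,η) ∈ [−1,1]×ℝ×[−1,1], lim_{S_i → 0⁺} Υ_{m,l,k}(t,φ,η; S_i) = Φ_{m,l,k}(t,φ,η). -/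
/-!
Let `w_S = h̃^{2l+1} (s̃²)^α` with `α = |m| + σ`. At `S = 0` this is `S_o^{2α}` times the cylinder
weight, so `q_j = S_o^{-α} Q_j^{cyl}` are orthonormal for `w_0`. Expand `R_S = Q_k^{ann}(·; S)` as
`∑_{j ≤ k} c_j q_j` with `c_j = ⟪R_S, q_j⟫_{w_0}`. Since `w_0 ≤ w_S`, Parseval gives
`∑ c_j² ≤ ⟪R_S, R_S⟫_{w_S} = 1`, so the `R_S` are uniformly bounded on `[-1, 1]`, and since
`w_S → w_0` uniformly, `⟪R_S, g⟫_{w_S} - ⟪R_S, g⟫_{w_0} → 0` for bounded `g`. Orthogonality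
`⟪R_S, q_j⟫_{w_S} = 0` for `j < k` then forces `c_j → 0`, normalisation forces `∑ c_j² → 1`, and
`c_k > 0` (leading coefficients) gives `c_k → 1`. So `R_S → q_k`, and the factor `S_o^{-α}`
cancels against the limit `S_o^α (1+t)^{α/2}` of `(s̃²)^{α/2}`.
-/

open MeasureTheory Polynomial Filter

open Finset Topology

theorem Polynomial.exists_eq_sum_smul_of_degree_le {K : Type*} [Field K] {Q : ℕ → K[X]}
    (hQ : ∀ j, (Q j).degree = j) {p : K[X]} {n : ℕ} (hp : p.degree ≤ n) :
    ∃ c : ℕ → K, p = ∑ j ∈ range (n + 1), c j • Q j := by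
  let S : Sequence K := ⟨Q, hQ⟩
  have hmem : p ∈ Submodule.span K (S '' Set.Iic n) := by
    rw [S.span_degreeLE fun i _ => (leadingCoeff_ne_zero.2 (S.ne_zero i)).isUnit]
    exact mem_degreeLE.2 hp
  obtain ⟨c, hc, rfl⟩ := Finsupp.mem_span_image_iff_linearCombination K |>.1 hmem
  refine ⟨c, Finsupp.sum_of_support_subset _ (fun j hj => ?_) _ (fun _ _ => zero_smul K _)⟩
  simpa [Nat.lt_succ_iff] using hc hj

theorem Polynomial.coeff_sum_range_succ_smul {K : Type*} [Field K] {Q : ℕ → K[X]}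
    (hQ : ∀ j, (Q j).degree = j) (c : ℕ → K) (n : ℕ) :
    (∑ j ∈ range (n + 1), c j • Q j).coeff n = c n * (Q n).leadingCoeff := by
  rw [finsetSum_coeff, sum_range_succ, sum_eq_zero fun j hj => ?_, zero_add, coeff_smul,
    smul_eq_mul, leadingCoeff, natDegree_eq_of_degree_eq_some (hQ n)]
  rw [coeff_smul, coeff_eq_zero_of_degree_lt (by rw [hQ j]; exact_mod_cast mem_range.1 hj),
    smul_zero]

noncomputable def weightedInner (w : ℝ → ℝ) (p q : ℝ[X]) : ℝ :=
  ∫ t in Set.Ioo (-1 : ℝ) 1, w t * p.eval t * q.eval t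

def IsOrthonormalFor (w : ℝ → ℝ) (Q : ℕ → ℝ[X]) : Prop :=
  ∀ i j, weightedInner w (Q i) (Q j) = if i = j then 1 else 0

section WeightedInner

variable {w : ℝ → ℝ}

theorem integrableOn_weight_mul_eval_mul_eval (hw : ContinuousOn w (Set.Icc (-1) 1))
    (p q : ℝ[X]) : IntegrableOn (fun t => w t * p.eval t * q.eval t) (Set.Ioo (-1) 1) :=
  ((hw.mul p.continuous.continuousOn).mul q.continuous.continuousOn).integrableOn_Icc.mono_set
    Set.Ioo_subset_Icc_self

theorem weightedInner_comm (w : ℝ → ℝ) (p q : ℝ[X]) :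
    weightedInner w p q = weightedInner w q p := by
  simp only [weightedInner, mul_right_comm]

theorem weightedInner_sum_smul_right (hw : ContinuousOn w (Set.Icc (-1) 1)) (p : ℝ[X])
    {ι : Type*} (s : Finset ι) (c : ι → ℝ) (Q : ι → ℝ[X]) :
    weightedInner w p (∑ i ∈ s, c i • Q i) = ∑ i ∈ s, c i * weightedInner w p (Q i) := by
  have hpt : ∀ t, w t * p.eval t * (∑ i ∈ s, c i • Q i).eval t
      = ∑ i ∈ s, c i * (w t * p.eval t * (Q i).eval t) := fun t => by
    simp only [eval_finsetSum, eval_smul, smul_eq_mul, mul_sum]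
    exact sum_congr rfl fun i _ => by ring
  simp only [weightedInner, hpt]
  rw [integral_finsetSum _ fun i _ =>
    (integrableOn_weight_mul_eval_mul_eval hw p (Q i)).const_mul (c i)]
  simp only [integral_const_mul]

theorem weightedInner_self_mono {w' : ℝ → ℝ} (hw : ContinuousOn w (Set.Icc (-1) 1))
    (hw' : ContinuousOn w' (Set.Icc (-1) 1)) (hle : ∀ t ∈ Set.Ioo (-1 : ℝ) 1, w t ≤ w' t)
    (p : ℝ[X]) : weightedInner w p p ≤ weightedInner w' p p := by
  refine setIntegral_mono_on (integrableOn_weight_mul_eval_mul_eval hw p p)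
    (integrableOn_weight_mul_eval_mul_eval hw' p p) measurableSet_Ioo fun t ht => ?_
  simpa only [mul_assoc] using mul_le_mul_of_nonneg_right (hle t ht) (mul_self_nonneg (p.eval t))

variable {Q : ℕ → ℝ[X]}

theorem IsOrthonormalFor.weightedInner_sum_smul_left (hQ : IsOrthonormalFor w Q)
    (hw : ContinuousOn w (Set.Icc (-1) 1)) (n : ℕ) (c : ℕ → ℝ) {j : ℕ} (hj : j < n) :
    weightedInner w (∑ i ∈ range n, c i • Q i) (Q j) = c j := by
  rw [weightedInner_comm, weightedInner_sum_smul_right hw]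
  simp [hQ j, hj]

theorem IsOrthonormalFor.eq_sum_weightedInner_smul (hQ : IsOrthonormalFor w Q)
    (hw : ContinuousOn w (Set.Icc (-1) 1)) (hdeg : ∀ j, (Q j).degree = j) {p : ℝ[X]} {n : ℕ}
    (hp : p.degree ≤ n) : p = ∑ j ∈ range (n + 1), weightedInner w p (Q j) • Q j := by
  obtain ⟨c, rfl⟩ := exists_eq_sum_smul_of_degree_le hdeg hp
  refine sum_congr rfl fun j hj => ?_
  rw [hQ.weightedInner_sum_smul_left hw _ _ (mem_range.1 hj)]

theorem IsOrthonormalFor.weightedInner_self_eq_sum_sq (hQ : IsOrthonormalFor w Q)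
    (hw : ContinuousOn w (Set.Icc (-1) 1)) (hdeg : ∀ j, (Q j).degree = j) {p : ℝ[X]} {n : ℕ}
    (hp : p.degree ≤ n) :
    weightedInner w p p = ∑ j ∈ range (n + 1), weightedInner w p (Q j) ^ 2 := by
  calc weightedInner w p p
      = weightedInner w p (∑ j ∈ range (n + 1), weightedInner w p (Q j) • Q j) := by
        rw [← hQ.eq_sum_weightedInner_smul hw hdeg hp]
    _ = ∑ j ∈ range (n + 1), weightedInner w p (Q j) ^ 2 := by
        simp only [weightedInner_sum_smul_right hw, sq]

theorem IsOrthonormalFor.weightedInner_eq_zero_of_degree_le (hQ : IsOrthonormalFor w Q)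
    (hw : ContinuousOn w (Set.Icc (-1) 1)) (hdeg : ∀ j, (Q j).degree = j) {p : ℝ[X]} {n k : ℕ}
    (hp : p.degree ≤ n) (hnk : n < k) : weightedInner w (Q k) p = 0 := by
  rw [hQ.eq_sum_weightedInner_smul hw hdeg hp, weightedInner_sum_smul_right hw]
  refine sum_eq_zero fun j hj => ?_
  rw [hQ k j, if_neg (by grind), mul_zero]

theorem IsOrthonormalFor.abs_eval_le_sum (hQ : IsOrthonormalFor w Q)
    (hw : ContinuousOn w (Set.Icc (-1) 1)) (hdeg : ∀ j, (Q j).degree = j) {p : ℝ[X]} {n : ℕ}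
    (hp : p.degree ≤ n) (hnorm : weightedInner w p p ≤ 1) (t : ℝ) :
    |p.eval t| ≤ ∑ j ∈ range (n + 1), |(Q j).eval t| := by
  have hcoeff : ∀ j ∈ range (n + 1), |weightedInner w p (Q j)| ≤ 1 := fun j hj => by
    rw [← sq_le_one_iff_abs_le_one]
    refine le_trans ?_ ((hQ.weightedInner_self_eq_sum_sq hw hdeg hp).symm.le.trans hnorm)
    exact single_le_sum (f := fun j => weightedInner w p (Q j) ^ 2) (fun _ _ => sq_nonneg _) hj
  rw [hQ.eq_sum_weightedInner_smul hw hdeg hp, eval_finsetSum]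
  refine (abs_sum_le_sum_abs _ _).trans (sum_le_sum fun j hj => ?_)
  rw [eval_smul, smul_eq_mul, abs_mul]
  exact mul_le_of_le_one_left (abs_nonneg _) (hcoeff j hj)

theorem IsOrthonormalFor.exists_abs_eval_le (hQ : IsOrthonormalFor w Q)
    (hw : ContinuousOn w (Set.Icc (-1) 1)) (hdeg : ∀ j, (Q j).degree = j) (n : ℕ) :
    ∃ M, (∀ j ≤ n, ∀ t ∈ Set.Ioo (-1 : ℝ) 1, |(Q j).eval t| ≤ M) ∧
      ∀ p : ℝ[X], p.degree ≤ n → weightedInner w p p ≤ 1 →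
        ∀ t ∈ Set.Ioo (-1 : ℝ) 1, |p.eval t| ≤ M := by
  obtain ⟨M, hM⟩ := isCompact_Icc.exists_bound_of_continuousOn
    (f := fun t => ∑ j ∈ range (n + 1), |(Q j).eval t|) (by fun_prop)
  have hMle : ∀ t ∈ Set.Ioo (-1 : ℝ) 1, ∑ j ∈ range (n + 1), |(Q j).eval t| ≤ M :=
    fun t ht => (le_abs_self _).trans (hM t (Set.Ioo_subset_Icc_self ht))
  refine ⟨M, fun j hj t ht => ?_, fun p hp hnorm t ht =>
    (hQ.abs_eval_le_sum hw hdeg hp hnorm t).trans (hMle t ht)⟩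
  exact (single_le_sum (f := fun j => |(Q j).eval t|) (fun _ _ => abs_nonneg _)
    (mem_range_succ_iff.2 hj)).trans (hMle t ht)

theorem IsOrthonormalFor.leadingCoeff_eq (hQ : IsOrthonormalFor w Q)
    (hw : ContinuousOn w (Set.Icc (-1) 1)) (hdeg : ∀ j, (Q j).degree = j) {p : ℝ[X]} {n : ℕ}
    (hp : p.degree = n) : p.leadingCoeff = weightedInner w p (Q n) * (Q n).leadingCoeff := by
  conv_lhs => rw [leadingCoeff, natDegree_eq_of_degree_eq_some hp,
    hQ.eq_sum_weightedInner_smul hw hdeg hp.le, coeff_sum_range_succ_smul hdeg]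

end WeightedInner

theorem tendsto_weightedInner_sub {ι : Type*} {L : Filter ι} {w : ι → ℝ → ℝ} {w₀ : ℝ → ℝ}
    (hw : ∀ s, ContinuousOn (w s) (Set.Icc (-1) 1)) (hw₀ : ContinuousOn w₀ (Set.Icc (-1) 1))
    (hunif : TendstoUniformlyOn w w₀ L (Set.Ioo (-1) 1)) {p q : ι → ℝ[X]} {M : ℝ}
    (hp : ∀ᶠ s in L, ∀ t ∈ Set.Ioo (-1 : ℝ) 1, |(p s).eval t| ≤ M)
    (hq : ∀ᶠ s in L, ∀ t ∈ Set.Ioo (-1 : ℝ) 1, |(q s).eval t| ≤ M) :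
    Tendsto (fun s => weightedInner (w s) (p s) (q s) - weightedInner w₀ (p s) (q s)) L
      (𝓝 0) := by
  rw [Metric.tendsto_nhds]
  intro ε hε
  have hδ : 0 < ε / (2 * (M ^ 2 + 1)) := by positivity
  filter_upwards [Metric.tendstoUniformlyOn_iff.1 hunif _ hδ, hp, hq] with s hws hps hqs
  have hdiff : weightedInner (w s) (p s) (q s) - weightedInner w₀ (p s) (q s)
      = ∫ t in Set.Ioo (-1 : ℝ) 1, (w s t - w₀ t) * (p s).eval t * (q s).eval t := by
    rw [weightedInner, weightedInner, ← integral_sub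
      (integrableOn_weight_mul_eval_mul_eval (hw s) _ _)
      (integrableOn_weight_mul_eval_mul_eval hw₀ _ _)]
    congr 1 with t
    ring
  have hpt : ∀ t ∈ Set.Ioo (-1 : ℝ) 1,
      ‖(w s t - w₀ t) * (p s).eval t * (q s).eval t‖ ≤ ε / (2 * (M ^ 2 + 1)) * M ^ 2 := by
    intro t ht
    have hM : |(p s).eval t| * |(q s).eval t| ≤ M ^ 2 := by
      rw [sq]
      exact mul_le_mul (hps t ht) (hqs t ht) (abs_nonneg _) ((abs_nonneg _).trans (hps t ht))
    rw [Real.norm_eq_abs, abs_mul, abs_mul, mul_assoc, abs_sub_comm]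
    exact mul_le_mul (Real.dist_eq _ _ ▸ (hws t ht).le) hM (by positivity) hδ.le
  rw [Real.dist_eq, sub_zero, hdiff]
  calc |∫ t in Set.Ioo (-1 : ℝ) 1, (w s t - w₀ t) * (p s).eval t * (q s).eval t|
      ≤ ε / (2 * (M ^ 2 + 1)) * M ^ 2 * volume.real (Set.Ioo (-1 : ℝ) 1) :=
        norm_setIntegral_le_of_norm_le_const measure_Ioo_lt_top hpt
    _ < ε := by
        rw [Real.volume_real_Ioo_of_le (by norm_num)]
        field_simp
        nlinarith

theorem tendsto_one_of_tendsto_sq {ι : Type*} {L : Filter ι} {f : ι → ℝ}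
    (hsq : Tendsto (fun s => f s ^ 2) L (𝓝 1)) (hpos : ∀ᶠ s in L, 0 < f s) :
    Tendsto f L (𝓝 1) := by
  rw [← Real.sqrt_one]
  refine hsq.sqrt.congr' ?_
  filter_upwards [hpos] with s hs
  exact Real.sqrt_sq hs.le

theorem tendsto_eval_of_tendstoUniformlyOn_weight {ι : Type*} {L : Filter ι}
    {w : ι → ℝ → ℝ} {w₀ : ℝ → ℝ} {Q : ℕ → ℝ[X]} {R : ι → ℕ → ℝ[X]} {k : ℕ}
    (hw : ∀ s, ContinuousOn (w s) (Set.Icc (-1) 1)) (hw₀ : ContinuousOn w₀ (Set.Icc (-1) 1))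
    (hunif : TendstoUniformlyOn w w₀ L (Set.Ioo (-1) 1))
    (hle : ∀ᶠ s in L, ∀ t ∈ Set.Ioo (-1 : ℝ) 1, w₀ t ≤ w s t)
    (hQ : IsOrthonormalFor w₀ Q) (hQdeg : ∀ j, (Q j).degree = j)
    (hQlead : 0 < (Q k).leadingCoeff)
    (hR : ∀ᶠ s in L, IsOrthonormalFor (w s) (R s) ∧ (∀ j, (R s j).degree = j) ∧
      0 < (R s k).leadingCoeff) (t : ℝ) :
    Tendsto (fun s => (R s k).eval t) L (𝓝 ((Q k).eval t)) := by
  set c : ι → ℕ → ℝ := fun s j => weightedInner w₀ (R s k) (Q j)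
  have hdegk : ∀ᶠ s in L, (R s k).degree ≤ k := hR.mono fun s hs => (hs.2.1 k).le
  have hexp : ∀ᶠ s in L, R s k = ∑ j ∈ range (k + 1), c s j • Q j :=
    hdegk.mono fun s hs => hQ.eq_sum_weightedInner_smul hw₀ hQdeg hs
  have hnorm : ∀ᶠ s in L, weightedInner w₀ (R s k) (R s k) ≤ 1 := by
    filter_upwards [hR, hle] with s hs hles
    simpa [hs.1 k k] using weightedInner_self_mono hw₀ (hw s) hles (R s k)
  obtain ⟨M, hQM, hbound⟩ := hQ.exists_abs_eval_le hw₀ hQdeg k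
  have hRM : ∀ᶠ s in L, ∀ t ∈ Set.Ioo (-1 : ℝ) 1, |(R s k).eval t| ≤ M := by
    filter_upwards [hdegk, hnorm] with s hdeg hn
    exact hbound _ hdeg hn
  have hlow : ∀ j < k, Tendsto (c · j) L (𝓝 0) := by
    intro j hj
    have hpert := tendsto_weightedInner_sub hw hw₀ hunif (q := fun _ => Q j) hRM
      (Eventually.of_forall fun _ => hQM j hj.le)
    rw [← neg_zero]
    refine hpert.neg.congr' ?_
    filter_upwards [hR] with s hs
    rw [hs.1.weightedInner_eq_zero_of_degree_le (hw s) hs.2.1 (hQdeg j).le hj]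
    simp [c]
  have hsq : Tendsto (fun s => c s k ^ 2) L (𝓝 1) := by
    have hpert := tendsto_weightedInner_sub hw hw₀ hunif hRM hRM
    have hlim := (tendsto_const_nhds (x := (1 : ℝ))).sub hpert |>.sub
      (tendsto_finsetSum (range k) fun j hj => (hlow j (mem_range.1 hj)).pow 2)
    simp only [zero_pow two_ne_zero, sum_const_zero, sub_zero] at hlim
    refine hlim.congr' ?_
    filter_upwards [hR, hdegk] with s hs hdeg
    rw [hs.1 k k, if_pos rfl, hQ.weightedInner_self_eq_sum_sq hw₀ hQdeg hdeg, sum_range_succ]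
    ring
  have hpos : ∀ᶠ s in L, 0 < c s k := by
    filter_upwards [hR] with s hs
    have hlead := hs.2.2
    rw [hQ.leadingCoeff_eq hw₀ hQdeg (hs.2.1 k)] at hlead
    exact (mul_pos_iff_of_pos_right hQlead).1 hlead
  have hlim := (tendsto_finsetSum (range k) fun j hj =>
    (hlow j (mem_range.1 hj)).mul_const ((Q j).eval t)).add
      ((tendsto_one_of_tendsto_sq hsq hpos).mul_const ((Q k).eval t))
  simp only [zero_mul, sum_const_zero, zero_add, one_mul] at hlim
  refine hlim.congr' ?_
  filter_upwards [hexp] with s hs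
  rw [hs, eval_finsetSum, sum_range_succ]
  simp [eval_smul]

noncomputable def annulusWeight (h : ℝ[X]) (e α So Si : ℝ) (t : ℝ) : ℝ :=
  h.eval t ^ e * (Si ^ 2 * (1 - t) + So ^ 2 * (1 + t)) ^ α

section AnnulusWeight

variable {h : ℝ[X]} {e α So : ℝ}

theorem continuous_annulusWeight_uncurry (he : 0 ≤ e) (hα : 0 ≤ α) :
    Continuous fun p : ℝ × ℝ => annulusWeight h e α So p.1 p.2 := by
  unfold annulusWeight
  fun_prop (disch := assumption)

theorem tendstoUniformlyOn_annulusWeight (he : 0 ≤ e) (hα : 0 ≤ α) :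
    TendstoUniformlyOn (annulusWeight h e α So) (annulusWeight h e α So 0) (𝓝[>] 0)
      (Set.Ioo (-1) 1) := by
  have hunif : TendstoUniformly (fun Si (t : Set.Icc (-1 : ℝ) 1) => annulusWeight h e α So Si t)
      (fun t => annulusWeight h e α So 0 t) (𝓝 0) :=
    Continuous.tendstoUniformly _ ((continuous_annulusWeight_uncurry he hα).comp
      (continuous_id.prodMap continuous_subtype_val)) 0
  exact fun u hu => ((tendstoUniformlyOn_iff_tendstoUniformly_comp_coe.2 hunif).mono
    Set.Ioo_subset_Icc_self u hu).filter_mono nhdsWithin_le_nhds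

theorem annulusWeight_zero_le (hh : ∀ t ∈ Set.Ioo (-1 : ℝ) 1, 0 ≤ h.eval t) (hα : 0 ≤ α)
    (Si : ℝ) {t : ℝ} (ht : t ∈ Set.Ioo (-1 : ℝ) 1) :
    annulusWeight h e α So 0 t ≤ annulusWeight h e α So Si t := by
  have h1t : 0 ≤ 1 + t := by linarith [ht.1]
  have h1t' : 0 ≤ 1 - t := by linarith [ht.2]
  refine mul_le_mul_of_nonneg_left (Real.rpow_le_rpow (by positivity) ?_ hα)
    (Real.rpow_nonneg (hh t ht) e)
  nlinarith [mul_nonneg (sq_nonneg Si) h1t']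

theorem annulusWeight_zero_eq {t : ℝ} (ht : -1 ≤ t) :
    annulusWeight h e α So 0 t = ((So ^ 2) ^ (α / 2)) ^ 2 * ((1 + t) ^ α * h.eval t ^ e) := by
  have hsq : ((So ^ 2) ^ (α / 2)) ^ 2 = (So ^ 2) ^ α := by
    rw [← Real.rpow_natCast, ← Real.rpow_mul (sq_nonneg So)]
    norm_num
  rw [annulusWeight, hsq, zero_pow two_ne_zero, zero_mul, zero_add,
    Real.mul_rpow (sq_nonneg So) (by linarith)]
  ring

end AnnulusWeight

theorem IsOrthonormalFor.inv_smul {w w' : ℝ → ℝ} {Q : ℕ → ℝ[X]} (hQ : IsOrthonormalFor w Q)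
    {a : ℝ} (ha : a ≠ 0) (hw' : ∀ t ∈ Set.Ioo (-1 : ℝ) 1, w' t = a ^ 2 * w t) :
    IsOrthonormalFor w' fun j => a⁻¹ • Q j := by
  intro i j
  rw [← hQ i j]
  refine setIntegral_congr_fun measurableSet_Ioo fun t ht => ?_
  simp only [eval_smul, smul_eq_mul, hw' t ht]
  field_simp

theorem statement13_general
    (h : Polynomial ℝ) (hpos : ∀ t ∈ Set.Icc (-1 : ℝ) 1, 0 < h.eval t)
    (So : ℝ) (hSo : 0 < So)
    (m : ℤ) (σ : ℤ) (hm : 0 ≤ |m| + σ)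
    (l k : ℕ)
    (P : ℕ → Polynomial ℝ)
    (Qcyl : ℕ → Polynomial ℝ)
    (hQcyldeg : ∀ j, (Qcyl j).degree = j) (hQcyllead : ∀ j, 0 < (Qcyl j).leadingCoeff)
    (hQcylorth : ∀ j j', (∫ t in Set.Ioo (-1 : ℝ) 1,
        (1 + t) ^ ((|m| + σ : ℤ) : ℝ) * h.eval t ^ (2 * (l : ℝ) + 1)
          * (Qcyl j).eval t * (Qcyl j').eval t)
      = if j = j' then (1 : ℝ) else 0)
    (Qann : ℝ → ℕ → Polynomial ℝ)
    (hQanndeg : ∀ Si ∈ Set.Ioo (0 : ℝ) So, ∀ j, (Qann Si j).degree = j)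
    (hQannlead : ∀ Si ∈ Set.Ioo (0 : ℝ) So, ∀ j, 0 < (Qann Si j).leadingCoeff)
    (hQannorth : ∀ Si ∈ Set.Ioo (0 : ℝ) So, ∀ j j', (∫ t in Set.Ioo (-1 : ℝ) 1,
        h.eval t ^ (2 * (l : ℝ) + 1)
          * (Si ^ 2 * (1 - t) + So ^ 2 * (1 + t)) ^ ((|m| + σ : ℤ) : ℝ)
          * (Qann Si j).eval t * (Qann Si j').eval t)
      = if j = j' then (1 : ℝ) else 0) :
    ∀ t ∈ Set.Icc (-1 : ℝ) 1, ∀ φ : ℝ, ∀ η ∈ Set.Icc (-1 : ℝ) 1,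
      Tendsto
        (fun Si : ℝ =>
          Complex.exp (Complex.I * m * φ) *
            (((Si ^ 2 * (1 - t) + So ^ 2 * (1 + t)) ^ (((|m| + σ : ℤ) : ℝ) / 2)
              * h.eval t ^ l * (P l).eval η * (Qann Si k).eval t : ℝ) : ℂ))
        (nhdsWithin 0 (Set.Ioi 0))
        (nhds (Complex.exp (Complex.I * m * φ) *
          (((1 + t) ^ (((|m| + σ : ℤ) : ℝ) / 2)
            * h.eval t ^ l * (P l).eval η * (Qcyl k).eval t : ℝ) : ℂ))) := by
  intro t ht φ η _
  set α : ℝ := ((|m| + σ : ℤ) : ℝ)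
  have hα : 0 ≤ α := Int.cast_nonneg hm
  have he : (0 : ℝ) ≤ 2 * l + 1 := by positivity
  set γ : ℝ := (So ^ 2) ^ (α / 2)
  have hγ : 0 < γ := Real.rpow_pos_of_pos (pow_pos hSo 2) _
  have hnonneg : ∀ t ∈ Set.Ioo (-1 : ℝ) 1, 0 ≤ h.eval t :=
    fun t ht => (hpos t (Set.Ioo_subset_Icc_self ht)).le
  have hcont := continuous_annulusWeight_uncurry (h := h) (So := So) he hα
  have hQ : Tendsto (fun Si => (Qann Si k).eval t) (𝓝[>] 0) (𝓝 ((γ⁻¹ • Qcyl k).eval t)) :=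
    tendsto_eval_of_tendstoUniformlyOn_weight
      (fun Si => (hcont.comp (.prodMk_right Si)).continuousOn)
      (hcont.comp (.prodMk_right 0)).continuousOn
      (tendstoUniformlyOn_annulusWeight he hα)
      (.of_forall fun Si _ => annulusWeight_zero_le hnonneg hα Si)
      (IsOrthonormalFor.inv_smul hQcylorth hγ.ne' fun t ht => annulusWeight_zero_eq ht.1.le)
      (fun j => by rw [smul_eq_C_mul, degree_C_mul (inv_ne_zero hγ.ne'), hQcyldeg])
      (by rw [smul_eq_C_mul, leadingCoeff_mul, leadingCoeff_C]
          exact mul_pos (inv_pos.2 hγ) (hQcyllead k))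
      (mem_of_superset (Ioo_mem_nhdsGT hSo) fun Si hSi =>
        ⟨hQannorth Si hSi, hQanndeg Si hSi, hQannlead Si hSi k⟩) t
  have hα2 : 0 ≤ α / 2 := by positivity
  have hprefactor : Tendsto (fun Si : ℝ => (Si ^ 2 * (1 - t) + So ^ 2 * (1 + t)) ^ (α / 2))
      (𝓝[>] 0) (𝓝 (γ * (1 + t) ^ (α / 2))) := by
    have hcont : Continuous fun Si : ℝ => (Si ^ 2 * (1 - t) + So ^ 2 * (1 + t)) ^ (α / 2) := by
      fun_prop (disch := assumption)
    convert hcont.continuousAt.tendsto.mono_left nhdsWithin_le_nhds using 2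
    rw [zero_pow two_ne_zero, zero_mul, zero_add,
      Real.mul_rpow (sq_nonneg So) (by linarith [ht.1])]
  have hreal := ((hprefactor.mul_const (h.eval t ^ l)).mul_const ((P l).eval η)).mul hQ
  rw [eval_smul, smul_eq_mul, show ∀ a b c d : ℝ, γ * a * b * c * (γ⁻¹ * d) = a * b * c * d by
    intro a b c d; field_simp] at hreal
  exact ((Complex.continuous_ofReal.tendsto _).comp hreal).const_mul _

/-- For `α = 0`, the annulus gyroscopic basis functions converge pointwise to the cylinder
gyroscopic basis functions as the inner radius `S_i` shrinks to zero. -/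
theorem statement13
    (h : Polynomial ℝ) (hpos : ∀ t ∈ Set.Icc (-1 : ℝ) 1, 0 < h.eval t)
    (So : ℝ) (hSo : 0 < So)
    (m : ℤ) (σ : ℤ) (hσ : σ = -1 ∨ σ = 0 ∨ σ = 1) (hm : 0 ≤ |m| + σ)
    (l k : ℕ)
    (P : ℕ → Polynomial ℝ)
    (hPdeg : ∀ j, (P j).degree = j) (hPlead : ∀ j, 0 < (P j).leadingCoeff)
    (hPorth : ∀ j j', (∫ η in Set.Ioo (-1 : ℝ) 1, (P j).eval η * (P j').eval η)
      = if j = j' then (1 : ℝ) else 0)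
    (Qcyl : ℕ → Polynomial ℝ)
    (hQcyldeg : ∀ j, (Qcyl j).degree = j) (hQcyllead : ∀ j, 0 < (Qcyl j).leadingCoeff)
    (hQcylorth : ∀ j j', (∫ t in Set.Ioo (-1 : ℝ) 1,
        (1 + t) ^ ((|m| + σ : ℤ) : ℝ) * h.eval t ^ (2 * (l : ℝ) + 1)
          * (Qcyl j).eval t * (Qcyl j').eval t)
      = if j = j' then (1 : ℝ) else 0)
    (Qann : ℝ → ℕ → Polynomial ℝ)
    (hQanndeg : ∀ Si ∈ Set.Ioo (0 : ℝ) So, ∀ j, (Qann Si j).degree = j)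
    (hQannlead : ∀ Si ∈ Set.Ioo (0 : ℝ) So, ∀ j, 0 < (Qann Si j).leadingCoeff)
    (hQannorth : ∀ Si ∈ Set.Ioo (0 : ℝ) So, ∀ j j', (∫ t in Set.Ioo (-1 : ℝ) 1,
        h.eval t ^ (2 * (l : ℝ) + 1)
          * (Si ^ 2 * (1 - t) + So ^ 2 * (1 + t)) ^ ((|m| + σ : ℤ) : ℝ)
          * (Qann Si j).eval t * (Qann Si j').eval t)
      = if j = j' then (1 : ℝ) else 0) :
    ∀ t ∈ Set.Icc (-1 : ℝ) 1, ∀ φ : ℝ, ∀ η ∈ Set.Icc (-1 : ℝ) 1,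
      Tendsto
        (fun Si : ℝ =>
          Complex.exp (Complex.I * m * φ) *
            (((Si ^ 2 * (1 - t) + So ^ 2 * (1 + t)) ^ (((|m| + σ : ℤ) : ℝ) / 2)
              * h.eval t ^ l * (P l).eval η * (Qann Si k).eval t : ℝ) : ℂ))
        (nhdsWithin 0 (Set.Ioi 0))
        (nhds (Complex.exp (Complex.I * m * φ) *
          (((1 + t) ^ (((|m| + σ : ℤ) : ℝ) / 2)
            * h.eval t ^ l * (P l).eval η * (Qcyl k).eval t : ℝ) : ℂ))) :=
  statement13_general h hpos So hSo m σ hm l k P Qcyl hQcyldeg hQcyllead hQcylorth Qann hQanndeg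
    hQannlead hQannorth
end

section
/- Each cylinder gyroscopic basis function with nonnegative azimuthal wavenumber and spin weight zero is a Cartesian polynomial: fix S_o > 0 and define t(s) = 2(s/S_o)² − 1 and h(s) = h̃(t(s)). Then for every m ∈ ℕ and l, k ∈ ℕ there exists a polynomial p ∈ ℂ[X,Y,Z] such that for all s ∈ [0,S_o], φ ∈ ℝ, and η ∈ [−1,1]: Φ_{m,l,k}^{(α,0)}(t(s), φ, η) = p(s cos φ, s sin φ, η·h(s)). -/
/-!
With `x + i y = s e^{iφ}` and `t = 2 (s/S_o)² - 1`, we have `1 + t = (√2 s/S_o)²`, so for `s ≥ 0`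
the factor `e^{imφ} (1 + t)^{m/2}` equals `(√2/S_o)^m (x + i y)^m`, while `t` itself is the
polynomial `2 (x² + y²)/S_o² - 1`; hence `Q(t)` and `h̃(t)` are polynomials in `x, y`. Since
`deg P_l ≤ l`, the product `h̃(t)^l P_l(η)` is the degree-`l` homogenization of `P_l` evaluated at
`(η h̃(t), h̃(t)) = (z, h̃(t))`, again a polynomial in `x, y, z`.
-/

open Polynomial

namespace Polynomial

theorem aeval_homogenize_mul_left {R A : Type*} [CommSemiring R] [CommSemiring A] [Algebra R A]
    {p : R[X]} {n : ℕ} (hn : p.natDegree ≤ n) (x a : A) :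
    MvPolynomial.aeval ![x * a, a] (p.homogenize n) = a ^ n * aeval x p := by
  refine induction_with_natDegree_le
    (fun p ↦ MvPolynomial.aeval ![x * a, a] (p.homogenize n) = a ^ n * aeval x p) n ?_ ?_ ?_ p hn
  · simp
  · intro k r _ hk
    simp only [homogenize_C_mul, homogenize_X_pow hk, map_mul, map_pow, MvPolynomial.aeval_C,
      MvPolynomial.aeval_X, aeval_C, aeval_X, Matrix.cons_val_zero, Matrix.cons_val_one]
    rw [← pow_mul_pow_sub a hk]
    ring
  · intro f g _ _ hf hg
    rw [homogenize_add, map_add, hf, hg, map_add, mul_add]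

end Polynomial

noncomputable def radialCoordinate (So : ℝ) : MvPolynomial (Fin 3) ℂ :=
  .C (2 / (So : ℂ) ^ 2) * (.X 0 ^ 2 + .X 1 ^ 2) - 1

section
variable (s φ : ℝ) (z : ℂ)

theorem eval_radialCoordinate (So : ℝ) :
    MvPolynomial.eval ![((s * Real.cos φ : ℝ) : ℂ), ((s * Real.sin φ : ℝ) : ℂ), z]
      (radialCoordinate So) = ((2 * (s / So) ^ 2 - 1 : ℝ) : ℂ) := by
  simp only [radialCoordinate, map_sub, map_mul, map_add, map_pow, map_one,
    MvPolynomial.eval_C, MvPolynomial.eval_X, Matrix.cons_val_zero, Matrix.cons_val_one]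
  push_cast
  linear_combination 2 * (s : ℂ) ^ 2 / (So : ℂ) ^ 2 * Complex.cos_sq_add_sin_sq (φ : ℂ)

theorem eval_X_add_I_mul_X :
    MvPolynomial.eval ![((s * Real.cos φ : ℝ) : ℂ), ((s * Real.sin φ : ℝ) : ℂ), z]
      (.X 0 + .C Complex.I * .X 1) = s * Complex.exp (φ * Complex.I) := by
  simp only [map_add, map_mul, MvPolynomial.eval_C, MvPolynomial.eval_X,
    Matrix.cons_val_zero, Matrix.cons_val_one]
  rw [Complex.exp_mul_I, ← Complex.ofReal_cos, ← Complex.ofReal_sin]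
  push_cast
  ring

end

theorem eval_aeval_of_eval_eq_ofReal {σ : Type*} {v : σ → ℂ}
    {T : MvPolynomial σ ℂ} {t : ℝ} (hT : MvPolynomial.eval v T = t) (q : ℝ[X]) :
    MvPolynomial.eval v (aeval T q) = q.eval t := by
  have hev : ⇑((MvPolynomial.aeval v).restrictScalars ℝ) = MvPolynomial.eval v := rfl
  rw [← hev, ← aeval_algHom_apply, hev, hT]
  exact aeval_algebraMap_apply_eq_algebraMap_eval t q

theorem eval_aeval_homogenize_of_eval_eq_ofReal {σ : Type*} {v : σ → ℂ}
    {Z H : MvPolynomial σ ℂ} {η c : ℝ} (hZ : MvPolynomial.eval v Z = η * c)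
    (hH : MvPolynomial.eval v H = c) {p : ℝ[X]} {l : ℕ} (hp : p.natDegree ≤ l) :
    MvPolynomial.eval v (MvPolynomial.aeval ![Z, H] (p.homogenize l))
      = ((c ^ l * p.eval η : ℝ) : ℂ) := by
  have hvals : (fun i ↦ MvPolynomial.eval v (![Z, H] i)) = ![(η : ℂ) * c, (c : ℂ)] := by
    funext i
    fin_cases i
    exacts [hZ, hH]
  calc MvPolynomial.eval v (MvPolynomial.aeval ![Z, H] (p.homogenize l))
      = MvPolynomial.aeval ![(η : ℂ) * c, (c : ℂ)] (p.homogenize l) := by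
        rw [← hvals]
        exact MvPolynomial.comp_aeval_apply _ ((MvPolynomial.aeval v).restrictScalars ℝ) _
    _ = (c : ℂ) ^ l * aeval (algebraMap ℝ ℂ η) p := aeval_homogenize_mul_left hp _ _
    _ = ((c ^ l * p.eval η : ℝ) : ℂ) := by
        rw [aeval_algebraMap_apply_eq_algebraMap_eval]
        push_cast
        rfl

theorem one_add_two_mul_sq_sub_one_rpow_half {x : ℝ} (hx : 0 ≤ x) (m : ℕ) :
    (1 + (2 * x ^ 2 - 1)) ^ ((m : ℝ) / 2) = (√2 * x) ^ m := by
  have hsq : 1 + (2 * x ^ 2 - 1) = (√2 * x) ^ 2 := by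
    rw [mul_pow, Real.sq_sqrt zero_le_two]
    ring
  rw [hsq, Real.rpow_div_two_eq_sqrt _ (sq_nonneg _), Real.sqrt_sq (by positivity),
    Real.rpow_natCast]

noncomputable def cartesianBasisPoly (h p q : ℝ[X]) (So : ℝ) (m l : ℕ) :
    MvPolynomial (Fin 3) ℂ :=
  .C ((√2 / So : ℝ) : ℂ) ^ m * (.X 0 + .C Complex.I * .X 1) ^ m * aeval (radialCoordinate So) q
    * MvPolynomial.aeval ![.X 2, aeval (radialCoordinate So) h] (p.homogenize l)

theorem eval_cartesianBasisPoly (h p q : ℝ[X]) {So s : ℝ} (hs : 0 ≤ s) (hSo : 0 ≤ So)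
    (φ η : ℝ) (m : ℕ) {l : ℕ} (hp : p.natDegree ≤ l) :
    MvPolynomial.eval ![((s * Real.cos φ : ℝ) : ℂ), ((s * Real.sin φ : ℝ) : ℂ),
        ((η * h.eval (2 * (s / So) ^ 2 - 1) : ℝ) : ℂ)] (cartesianBasisPoly h p q So m l)
      = Complex.exp (Complex.I * m * φ) *
          (((1 + (2 * (s / So) ^ 2 - 1)) ^ ((m : ℝ) / 2) * h.eval (2 * (s / So) ^ 2 - 1) ^ l
            * p.eval η * q.eval (2 * (s / So) ^ 2 - 1) : ℝ) : ℂ) := by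
  set t := 2 * (s / So) ^ 2 - 1
  set v : Fin 3 → ℂ := ![((s * Real.cos φ : ℝ) : ℂ), ((s * Real.sin φ : ℝ) : ℂ),
    ((η * h.eval t : ℝ) : ℂ)]
  have hT : MvPolynomial.eval v (radialCoordinate So) = t := eval_radialCoordinate s φ _ So
  have hhomog := eval_aeval_homogenize_of_eval_eq_ofReal (Z := .X 2) (η := η) (by simp [v])
    (eval_aeval_of_eval_eq_ofReal hT h) hp
  rw [cartesianBasisPoly, map_mul, map_mul, map_mul, map_pow, map_pow, MvPolynomial.eval_C,
    eval_X_add_I_mul_X, eval_aeval_of_eval_eq_ofReal hT, hhomog,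
    one_add_two_mul_sq_sub_one_rpow_half (div_nonneg hs hSo), mul_pow, ← Complex.exp_nat_mul]
  push_cast
  ring

theorem statement14_general
    (h : Polynomial ℝ)
    (P : ℕ → Polynomial ℝ)
    (hPdeg : ∀ l, (P l).degree = l)
    (Q : ℕ → ℕ → ℕ → Polynomial ℝ)
    (So : ℝ) :
    ∀ m l k : ℕ, ∃ pc : MvPolynomial (Fin 3) ℂ,
      ∀ s ∈ Set.Icc (0 : ℝ) So, ∀ φ : ℝ, ∀ η ∈ Set.Icc (-1 : ℝ) 1,
        Complex.exp (Complex.I * m * φ) *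
          (((1 + (2 * (s / So) ^ 2 - 1)) ^ ((m : ℝ) / 2)
            * h.eval (2 * (s / So) ^ 2 - 1) ^ l
            * (P l).eval η * (Q m l k).eval (2 * (s / So) ^ 2 - 1) : ℝ) : ℂ)
        = MvPolynomial.eval
            ![((s * Real.cos φ : ℝ) : ℂ), ((s * Real.sin φ : ℝ) : ℂ),
              ((η * h.eval (2 * (s / So) ^ 2 - 1) : ℝ) : ℂ)] pc := by
  intro m l k
  refine ⟨cartesianBasisPoly h (P l) (Q m l k) So m l, fun s hs φ η _ ↦ ?_⟩
  exact (eval_cartesianBasisPoly h (P l) (Q m l k) hs.1 (hs.1.trans hs.2) φ η m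
    (natDegree_le_of_degree_le (hPdeg l).le)).symm

/-- Each cylinder gyroscopic basis function with nonnegative azimuthal wavenumber `m` and
spin weight `σ = 0` is a Cartesian polynomial:  `Φ_{m,l,k}^{(α,0)}(t(s),φ,η)` equals a
polynomial in `(x, y, z) = (s cos φ, s sin φ, η h(s))`, where `t(s) = 2(s/S_o)² - 1` and
`h(s) = h̃(t(s))`. -/
theorem statement14
    (h : Polynomial ℝ) (hpos : ∀ t ∈ Set.Icc (-1 : ℝ) 1, 0 < h.eval t)
    (α : ℝ) (hα : -1 < α)
    (P : ℕ → Polynomial ℝ)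
    (hPdeg : ∀ l, (P l).degree = l) (hPlead : ∀ l, 0 < (P l).leadingCoeff)
    (hPorth : ∀ l l', (∫ η in Set.Ioo (-1 : ℝ) 1,
        (1 - η ^ 2) ^ α * (P l).eval η * (P l').eval η)
      = if l = l' then (1 : ℝ) else 0)
    (Q : ℕ → ℕ → ℕ → Polynomial ℝ)
    (hQdeg : ∀ m l k, (Q m l k).degree = k) (hQlead : ∀ m l k, 0 < (Q m l k).leadingCoeff)
    (hQorth : ∀ m l j k : ℕ,
      (∫ t in Set.Ioo (-1 : ℝ) 1,
        (1 - t) ^ α * (1 + t) ^ (m : ℝ) * h.eval t ^ (2 * (l : ℝ) + 2 * α + 1)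
          * (Q m l j).eval t * (Q m l k).eval t)
      = if j = k then (1 : ℝ) else 0)
    (So : ℝ) (hSo : 0 < So) :
    ∀ m l k : ℕ, ∃ pc : MvPolynomial (Fin 3) ℂ,
      ∀ s ∈ Set.Icc (0 : ℝ) So, ∀ φ : ℝ, ∀ η ∈ Set.Icc (-1 : ℝ) 1,
        Complex.exp (Complex.I * m * φ) *
          (((1 + (2 * (s / So) ^ 2 - 1)) ^ ((m : ℝ) / 2)
            * h.eval (2 * (s / So) ^ 2 - 1) ^ l
            * (P l).eval η * (Q m l k).eval (2 * (s / So) ^ 2 - 1) : ℝ) : ℂ)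
        = MvPolynomial.eval
            ![((s * Real.cos φ : ℝ) : ℂ), ((s * Real.sin φ : ℝ) : ℂ),
              ((η * h.eval (2 * (s / So) ^ 2 - 1) : ℝ) : ℂ)] pc :=
  statement14_general h P hPdeg Q So
end

section
/- The stretched vertical derivative D⁰, defined by (D⁰ f)(t,φ,η) = h̃(t)^{−1} ∂f/∂η (t,φ,η), acts sparsely on the cylinder gyroscopic bases: for all l, l′, k, k′ ∈ ℕ, ⟨D⁰ Φ_{m,l,k}^{(α,σ)}, Φ_{m,l′,k′}^{(α+1,σ)}⟩_{dμ(α+1)} = 0 unless l′ = l−1 and k−1 ≤ k′ ≤ k. -/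
/-!
The integrand separates: the phases cancel and the weight splits into a vertical factor
`(1 - η²)^(α+1) (∂P_l) P¹_{l'}` times a radial factor
`(1 - t)^(α+1) (1 + t)^(|m|+σ) h̃^(l+l'+2α+2) Q_k Q¹_{k'}`, so the inner product is a product
of two one-dimensional integrals.

If `l' + 1 ≠ l` the vertical integral vanishes. For `l ≤ l'` this is orthogonality of
`P¹_{l'}` against `∂P_l`, of degree `< l'`. For `l ≥ l' + 2`, integrating by parts moves the
derivative onto `(1 - η²)^(α+1) P¹_{l'}`, whose derivative is `(1 - η²)^α` times a polynomial
of degree `l' + 1 < l`, orthogonal to `P_l`.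

If `l' + 1 = l`, the two radial families carry the same power of `h̃` and their weights differ
by the factor `1 - t`. Hence `Q_k ⊥ Q¹_{k'}` when `k < k'`, and `(1 - t) Q¹_{k'} ⊥ Q_k` when
`k > k' + 1`.
-/

open MeasureTheory Polynomial Set

namespace Polynomial

def Sequence.IsOrthonormal (S : Sequence ℝ) (s : Set ℝ) (w : ℝ → ℝ) : Prop :=
  ∀ j k, ∫ x in s, w x * (S j).eval x * (S k).eval x = if j = k then 1 else 0

section Orthonormal

variable {s : Set ℝ} {w : ℝ → ℝ}

theorem _root_.MeasureTheory.IntegrableOn.mul_eval_mul_eval (hs : MeasurableSet s)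
    (hsb : Bornology.IsBounded s) (hw : IntegrableOn w s) (p q : ℝ[X]) :
    IntegrableOn (fun x => w x * p.eval x * q.eval x) s := by
  simpa only [mul_assoc] using hw.mul_continuousOn_of_subset (g' := fun x => p.eval x * q.eval x)
    (by fun_prop) hs hsb.isCompact_closure subset_closure

-- A non-integrable integrand would have integral `0`, contradicting `∫ w S₀² = 1`.
theorem Sequence.IsOrthonormal.integrableOn {S : Sequence ℝ} (hS : S.IsOrthonormal s w) :
    IntegrableOn w s := by
  obtain ⟨c, hc⟩ : ∃ c, S 0 = C c := ⟨_, eq_C_of_degree_le_zero (S.degree_eq 0).le⟩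
  have hc0 : c ≠ 0 := by simpa [hc] using S.ne_zero 0
  have hint : IntegrableOn (fun x => w x * (S 0).eval x * (S 0).eval x) s :=
    Integrable.of_integral_ne_zero (by simp [hS 0 0])
  simpa [IntegrableOn, hc, mul_assoc, hc0] using hint.mul_const (c * c)⁻¹

theorem Sequence.IsOrthonormal.integral_mul_eval_eq_zero {S : Sequence ℝ}
    (hS : S.IsOrthonormal s w) (hs : MeasurableSet s) (hsb : Bornology.IsBounded s) {N : ℕ}
    {p : ℝ[X]} (hp : p.degree < N) :
    ∫ x in s, w x * p.eval x * (S N).eval x = 0 := by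
  have hint := hS.integrableOn.mul_eval_mul_eval hs hsb
  let L : ℝ[X] →ₗ[ℝ] ℝ :=
    { toFun := fun p => ∫ x in s, w x * p.eval x * (S N).eval x
      map_add' := fun p q => by
        simp only [eval_add, mul_add, add_mul]
        exact integral_add (hint p _) (hint q _)
      map_smul' := fun c p => by
        simp only [eval_smul, smul_eq_mul, RingHom.id_apply, ← integral_const_mul]
        congr 1 with x
        ring }
  have hspan : degreeLT ℝ N ≤ LinearMap.ker L := by
    rw [← S.span_degreeLT fun i _ =>
      isUnit_iff_ne_zero.mpr (leadingCoeff_ne_zero.mpr (S.ne_zero i))]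
    refine Submodule.span_le.mpr ?_
    rintro _ ⟨j, hj, rfl⟩
    simp [L, hS j N, (Set.mem_Iio.mp hj).ne]
  exact hspan (mem_degreeLT.mpr hp)

theorem Sequence.IsOrthonormal.integral_mul_eval_mul_eval_eq_zero {S T : Sequence ℝ}
    {v : ℝ → ℝ} (hS : S.IsOrthonormal s w) (hT : T.IsOrthonormal s v) (hs : MeasurableSet s)
    (hsb : Bornology.IsBounded s) (ρ : ℝ[X]) (hv : ∀ x ∈ s, v x = ρ.eval x * w x)
    {k k' : ℕ} (hk : k ∉ Icc k' (k' + ρ.natDegree)) :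
    ∫ x in s, v x * (S k).eval x * (T k').eval x = 0 := by
  rcases Nat.lt_or_ge k k' with hkk' | hkk'
  · exact hT.integral_mul_eval_eq_zero hs hsb (by rw [S.degree_eq]; exact_mod_cast hkk')
  · have hdeg : (ρ * T k').degree < k := by
      refine degree_le_natDegree.trans_lt ?_
      have := natDegree_mul_le (p := ρ) (q := T k')
      simp only [mem_Icc, not_and, not_le] at hk
      exact_mod_cast (this.trans_eq (by simp [add_comm])).trans_lt (hk hkk')
    rw [← hS.integral_mul_eval_eq_zero hs hsb hdeg]
    refine setIntegral_congr_fun hs fun x hx => ?_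
    simp only [hv x hx, eval_mul]
    ring

end Orthonormal

noncomputable def rodriguesStep (α : ℝ) (q : ℝ[X]) : ℝ[X] :=
  C (-2 * (α + 1)) * X * q + (1 - X ^ 2) * derivative q

theorem rodriguesStep_mul (α : ℝ) (p q : ℝ[X]) :
    rodriguesStep α (p * q) = (1 - X ^ 2) * derivative p * q + p * rodriguesStep α q := by
  simp only [rodriguesStep, derivative_mul]
  ring

theorem natDegree_rodriguesStep_le (α : ℝ) (q : ℝ[X]) :
    (rodriguesStep α q).natDegree ≤ q.natDegree + 1 := by
  unfold rodriguesStep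
  refine natDegree_add_le_of_degree_le ?_ ?_
  · compute_degree
    omega
  · by_cases hq : q.natDegree = 0
    · simp [derivative_of_natDegree_zero hq]
    · compute_degree
      omega

theorem hasDerivAt_one_sub_sq_rpow_mul_eval (α : ℝ) (q : ℝ[X]) {x : ℝ}
    (hx : x ∈ Ioo (-1 : ℝ) 1) :
    HasDerivAt (fun y => (1 - y ^ 2) ^ (α + 1) * q.eval y)
      ((1 - x ^ 2) ^ α * (rodriguesStep α q).eval x) x := by
  have hpos : 0 < 1 - x ^ 2 := by nlinarith [hx.1, hx.2]
  have hbase : HasDerivAt (fun y : ℝ => 1 - y ^ 2) (-(2 * x)) x := by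
    simpa using (hasDerivAt_pow 2 x).const_sub 1
  refine ((hbase.rpow_const (p := α + 1) (Or.inl hpos.ne')).mul
    (q.hasDerivAt x)).congr_deriv ?_
  rw [add_sub_cancel_right, Real.rpow_add_one hpos.ne']
  simp only [rodriguesStep, eval_add, eval_mul, eval_C, eval_X, eval_sub, eval_one, eval_pow]
  ring

theorem integral_one_sub_sq_rpow_mul_rodriguesStep {α : ℝ} (hα : -1 < α)
    (hw : IntegrableOn (fun x => (1 - x ^ 2) ^ α) (Ioo (-1 : ℝ) 1)) (q : ℝ[X]) :
    ∫ x in Ioo (-1 : ℝ) 1, (1 - x ^ 2) ^ α * (rodriguesStep α q).eval x = 0 := by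
  have hint : IntervalIntegrable (fun x => (1 - x ^ 2) ^ α * (rodriguesStep α q).eval x)
      volume (-1) 1 := by
    rw [intervalIntegrable_iff_integrableOn_Ioo_of_le (by norm_num)]
    exact hw.mul_continuousOn_of_subset (by fun_prop) measurableSet_Ioo isCompact_Icc
      Ioo_subset_Icc_self
  have hcont : ContinuousOn (fun y : ℝ => (1 - y ^ 2) ^ (α + 1) * q.eval y) (Icc (-1 : ℝ) 1) :=
    (ContinuousOn.rpow_const (by fun_prop) fun _ _ => Or.inr (by linarith)).mul (by fun_prop)
  rw [← integral_Ioc_eq_integral_Ioo, ← intervalIntegral.integral_of_le (by norm_num),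
    intervalIntegral.integral_eq_sub_of_hasDeriv_right_of_le (by norm_num) hcont
      (fun x hx => (hasDerivAt_one_sub_sq_rpow_mul_eval α q hx).hasDerivWithinAt) hint]
  simp [Real.zero_rpow (by linarith : α + 1 ≠ 0)]

theorem integral_one_sub_sq_rpow_succ_mul_derivative {α : ℝ} (hα : -1 < α)
    (hw : IntegrableOn (fun x => (1 - x ^ 2) ^ α) (Ioo (-1 : ℝ) 1)) (p q : ℝ[X]) :
    ∫ x in Ioo (-1 : ℝ) 1, (1 - x ^ 2) ^ (α + 1) * (derivative p).eval x * q.eval x =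
      -∫ x in Ioo (-1 : ℝ) 1, (1 - x ^ 2) ^ α * (rodriguesStep α q).eval x * p.eval x := by
  have hint (r : ℝ[X]) : IntegrableOn (fun x => (1 - x ^ 2) ^ α * r.eval x) (Ioo (-1 : ℝ) 1) :=
    hw.mul_continuousOn_of_subset (by fun_prop) measurableSet_Ioo isCompact_Icc
      Ioo_subset_Icc_self
  have hsplit : ∀ x ∈ Ioo (-1 : ℝ) 1, (1 - x ^ 2) ^ α * (rodriguesStep α (p * q)).eval x =
      (1 - x ^ 2) ^ α * ((1 - X ^ 2) * derivative p * q).eval x +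
        (1 - x ^ 2) ^ α * (rodriguesStep α q * p).eval x := by
    intro x _
    rw [rodriguesStep_mul, eval_add, mul_comm p]
    ring
  have hzero := integral_one_sub_sq_rpow_mul_rodriguesStep hα hw (p * q)
  rw [setIntegral_congr_fun measurableSet_Ioo hsplit, integral_add (hint _) (hint _)] at hzero
  rw [eq_neg_iff_add_eq_zero, ← hzero]
  congr 1 <;> refine setIntegral_congr_fun measurableSet_Ioo fun x hx => ?_
  · have hpos : 0 < 1 - x ^ 2 := by nlinarith [hx.1, hx.2]
    simp only [eval_mul, eval_sub, eval_one, eval_pow, eval_X, Real.rpow_add_one hpos.ne']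
    ring
  · simp only [eval_mul]
    ring

theorem Sequence.IsOrthonormal.integral_derivative_mul_eq_zero {α : ℝ} (hα : -1 < α)
    {P P1 : Sequence ℝ} (hP : P.IsOrthonormal (Ioo (-1) 1) fun x => (1 - x ^ 2) ^ α)
    (hP1 : P1.IsOrthonormal (Ioo (-1) 1) fun x => (1 - x ^ 2) ^ (α + 1))
    {l l' : ℕ} (hl : l' + 1 ≠ l) :
    ∫ x in Ioo (-1 : ℝ) 1, (1 - x ^ 2) ^ (α + 1) * (derivative (P l)).eval x * (P1 l').eval x
      = 0 := by
  rcases le_or_gt l l' with hll' | hll'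
  · refine hP1.integral_mul_eval_eq_zero measurableSet_Ioo (Metric.isBounded_Ioo _ _) ?_
    exact (degree_derivative_lt (P.ne_zero l)).trans_le (by simpa using hll')
  · rw [integral_one_sub_sq_rpow_succ_mul_derivative hα hP.integrableOn,
      hP.integral_mul_eval_eq_zero measurableSet_Ioo (Metric.isBounded_Ioo _ _), neg_zero]
    refine degree_le_natDegree.trans_lt ?_
    have := natDegree_rodriguesStep_le α (P1 l')
    rw [P1.natDegree_eq] at this
    exact_mod_cast this.trans_lt (by omega)

theorem Sequence.IsOrthonormal.integral_radial_eq_zero {h : ℝ[X]} {α e : ℝ} {l : ℕ}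
    {S T : Sequence ℝ}
    (hS : S.IsOrthonormal (Ioo (-1) 1)
      fun t => (1 - t) ^ α * (1 + t) ^ e * h.eval t ^ (2 * ((l + 1 : ℕ) : ℝ) + 2 * α + 1))
    (hT : T.IsOrthonormal (Ioo (-1) 1)
      fun t => (1 - t) ^ (α + 1) * (1 + t) ^ e * h.eval t ^ (2 * (l : ℝ) + 2 * α + 3))
    {k k' : ℕ} (hk : k ∉ Icc k' (k' + 1)) :
    ∫ t in Ioo (-1 : ℝ) 1, (1 - t) ^ (α + 1) * (1 + t) ^ e
      * h.eval t ^ (2 * (l : ℝ) + 2 * α + 3) * (S k).eval t * (T k').eval t = 0 := by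
  have hdeg : (1 - X : ℝ[X]).natDegree = 1 := by compute_degree!
  refine hS.integral_mul_eval_mul_eval_eq_zero hT measurableSet_Ioo (Metric.isBounded_Ioo _ _)
    (1 - X) (fun t ht => ?_) (by rwa [hdeg])
  have hexp : 2 * ((l + 1 : ℕ) : ℝ) + 2 * α + 1 = 2 * (l : ℝ) + 2 * α + 3 := by
    push_cast
    ring
  simp only [eval_sub, eval_one, eval_X, hexp, Real.rpow_add_one (sub_pos.2 ht.2).ne']
  ring

end Polynomial

theorem integral_integral_setIntegral_Ico_eq_mul {s u : Set ℝ} (hs : MeasurableSet s) {a b : ℝ}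
    (hab : a ≤ b) {F : ℝ → ℝ → ℝ → ℂ} {A B : ℝ → ℝ}
    (hF : ∀ t ∈ s, ∀ η φ, F t η φ = ((A η * B t : ℝ) : ℂ)) :
    ∫ t in s, ∫ η in u, ∫ φ in Ico a b, F t η φ =
      (((b - a) * ((∫ η in u, A η) * ∫ t in s, B t) : ℝ) : ℂ) := by
  calc ∫ t in s, ∫ η in u, ∫ φ in Ico a b, F t η φ
      = ∫ t in s, ((((b - a) * ∫ η in u, A η) * B t : ℝ) : ℂ) := by
        refine setIntegral_congr_fun hs fun t ht => ?_
        calc ∫ η in u, ∫ φ in Ico a b, F t η φ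
            = ∫ η in u, (((b - a) * A η * B t : ℝ) : ℂ) := by
              congr 1 with η
              rw [setIntegral_congr_fun measurableSet_Ico fun φ _ => hF t ht η φ,
                setIntegral_const, Real.volume_real_Ico_of_le hab, Complex.real_smul]
              push_cast
              ring
          _ = _ := by rw [integral_complex_ofReal, integral_mul_const, integral_const_mul]
    _ = _ := by rw [integral_complex_ofReal, integral_const_mul, mul_assoc]

theorem ofReal_mul_conj_inv_mul_deriv_mul {E : ℂ} (hE : starRingEnd ℂ E * E = 1)
    {f : ℝ → ℝ} {f' η : ℝ} (hf : HasDerivAt f f' η) (W c r : ℝ) :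
    (W : ℂ) * starRingEnd ℂ ((c : ℂ)⁻¹ * deriv (fun y => E * (f y : ℂ)) η) * (E * r) =
      ((W * c⁻¹ * f' * r : ℝ) : ℂ) := by
  rw [(hf.ofReal_comp.const_mul E).deriv]
  simp only [map_mul, map_inv₀, Complex.conj_ofReal]
  push_cast
  linear_combination (W * (c : ℂ)⁻¹ * f' * r) * hE

theorem ofReal_weight_mul_conj_inv_mul_deriv_mul {x u : ℝ} (hx : 0 < x) (hu : 0 < u) {E : ℂ}
    (hE : starRingEnd ℂ E * E = 1) (a b α e : ℝ) (l l' : ℕ) (p p1 : ℝ[X]) (q q1 η : ℝ) :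
    ((a ^ (α + 1) * b ^ (α + 1) * x ^ (2 * α + 3) : ℝ) : ℂ)
        * starRingEnd ℂ ((x : ℂ)⁻¹
          * deriv (fun y => E * ((u ^ (e / 2) * x ^ l * p.eval y * q : ℝ) : ℂ)) η)
        * (E * ((u ^ (e / 2) * x ^ l' * p1.eval η * q1 : ℝ) : ℂ)) =
      ((a ^ (α + 1) * (derivative p).eval η * p1.eval η
        * (b ^ (α + 1) * u ^ e * x ^ ((l : ℝ) + l' + 2 * α + 2) * q * q1) : ℝ) : ℂ) := by
  rw [ofReal_mul_conj_inv_mul_deriv_mul hE (((p.hasDerivAt η).const_mul _).mul_const _)]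
  have hpow : x ^ (2 * α + 3) * x⁻¹ * x ^ l * x ^ l' = x ^ ((l : ℝ) + l' + 2 * α + 2) := by
    rw [← Real.rpow_natCast, ← Real.rpow_natCast, ← Real.rpow_neg_one, ← Real.rpow_add hx,
      ← Real.rpow_add hx, ← Real.rpow_add hx]
    ring_nf
  have hhalf : u ^ (e / 2) * u ^ (e / 2) = u ^ e := by rw [← Real.rpow_add hu, add_halves]
  rw [← hpow, ← hhalf]
  push_cast
  ring

theorem statement18_general
    (h : Polynomial ℝ) (hpos : ∀ t ∈ Set.Icc (-1 : ℝ) 1, 0 < h.eval t)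
    (α : ℝ) (hα : -1 < α) (σ : ℤ)
    (m : ℤ)
    (P P1 : ℕ → Polynomial ℝ)
    (hPdeg : ∀ l, (P l).degree = l)
    (hPorth : ∀ l l', (∫ η in Set.Ioo (-1 : ℝ) 1,
        (1 - η ^ 2) ^ α * (P l).eval η * (P l').eval η)
      = if l = l' then (1 : ℝ) else 0)
    (hP1deg : ∀ l, (P1 l).degree = l)
    (hP1orth : ∀ l l', (∫ η in Set.Ioo (-1 : ℝ) 1,
        (1 - η ^ 2) ^ (α + 1) * (P1 l).eval η * (P1 l').eval η)
      = if l = l' then (1 : ℝ) else 0)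
    (Q Q1 : ℕ → ℕ → Polynomial ℝ)
    (hQdeg : ∀ l k, (Q l k).degree = k)
    (hQorth : ∀ l j k : ℕ, (∫ t in Set.Ioo (-1 : ℝ) 1,
        (1 - t) ^ α * (1 + t) ^ ((|m| + σ : ℤ) : ℝ) * h.eval t ^ (2 * (l : ℝ) + 2 * α + 1)
          * (Q l j).eval t * (Q l k).eval t)
      = if j = k then (1 : ℝ) else 0)
    (hQ1deg : ∀ l k, (Q1 l k).degree = k)
    (hQ1orth : ∀ l j k : ℕ, (∫ t in Set.Ioo (-1 : ℝ) 1,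
        (1 - t) ^ (α + 1) * (1 + t) ^ ((|m| + σ : ℤ) : ℝ)
          * h.eval t ^ (2 * (l : ℝ) + 2 * α + 3)
          * (Q1 l j).eval t * (Q1 l k).eval t)
      = if j = k then (1 : ℝ) else 0)
    (Φ Φ1 : ℕ → ℕ → ℝ → ℝ → ℝ → ℂ)
    (hΦ : ∀ l k t φ η, Φ l k t φ η =
      Complex.exp (Complex.I * m * φ) *
        (((1 + t) ^ (((|m| + σ : ℤ) : ℝ) / 2) * h.eval t ^ l
          * (P l).eval η * (Q l k).eval t : ℝ) : ℂ))
    (hΦ1 : ∀ l k t φ η, Φ1 l k t φ η =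
      Complex.exp (Complex.I * m * φ) *
        (((1 + t) ^ (((|m| + σ : ℤ) : ℝ) / 2) * h.eval t ^ l
          * (P1 l).eval η * (Q1 l k).eval t : ℝ) : ℂ)) :
    ∀ l l' k k' : ℕ,
      ¬(l' + 1 = l ∧ k ≤ k' + 1 ∧ k' ≤ k) →
      (2 * Real.pi : ℂ)⁻¹ *
        (∫ t in Set.Ioo (-1 : ℝ) 1, ∫ η in Set.Ioo (-1 : ℝ) 1,
          ∫ φ in Set.Ico (0 : ℝ) (2 * Real.pi),
            (((1 - η ^ 2) ^ (α + 1) * (1 - t) ^ (α + 1) * h.eval t ^ (2 * α + 3) : ℝ) : ℂ)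
              * (starRingEnd ℂ)
                  (((h.eval t : ℝ) : ℂ)⁻¹ * deriv (fun y : ℝ => Φ l k t φ y) η)
              * Φ1 l' k' t φ η)
      = 0 := by
  intro l l' k k' hcond
  rw [integral_integral_setIntegral_Ico_eq_mul measurableSet_Ioo Real.two_pi_pos.le
    (A := fun η => (1 - η ^ 2) ^ (α + 1) * (derivative (P l)).eval η * (P1 l').eval η)
    (B := fun t => (1 - t) ^ (α + 1) * (1 + t) ^ ((|m| + σ : ℤ) : ℝ)
      * h.eval t ^ ((l : ℝ) + l' + 2 * α + 2) * (Q l k).eval t * (Q1 l' k').eval t)]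
  · refine mul_eq_zero_of_right _ (Complex.ofReal_eq_zero.mpr
      (mul_eq_zero_of_right _ (mul_eq_zero.mpr ?_)))
    by_cases hl : l' + 1 = l
    · subst hl
      right
      rw [show ((l' + 1 : ℕ) : ℝ) + l' + 2 * α + 2 = 2 * (l' : ℝ) + 2 * α + 3 by
        push_cast; ring]
      exact Sequence.IsOrthonormal.integral_radial_eq_zero (S := ⟨Q (l' + 1), hQdeg _⟩)
        (T := ⟨Q1 l', hQ1deg l'⟩) (hQorth _) (hQ1orth l') (by rw [mem_Icc]; omega)
    · left
      exact Sequence.IsOrthonormal.integral_derivative_mul_eq_zero hα (P := ⟨P, hPdeg⟩)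
        (P1 := ⟨P1, hP1deg⟩) hPorth hP1orth hl
  · intro t ht η φ
    rw [show (fun y => Φ l k t φ y) = _ from funext (hΦ l k t φ), hΦ1]
    exact ofReal_weight_mul_conj_inv_mul_deriv_mul (hpos t (Ioo_subset_Icc_self ht))
      (by linarith [ht.1]) (by rw [Complex.conj_mul', Complex.norm_exp]; simp) ..

/-- The stretched vertical derivative `(D⁰ f)(t,φ,η) = h̃(t)⁻¹ ∂f/∂η` acts sparsely on the
cylinder gyroscopic bases:  `⟨D⁰ Φ_{m,l,k}^{(α,σ)}, Φ_{m,l',k'}^{(α+1,σ)}⟩_{dμ(α+1)} = 0`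
unless `l' = l - 1` and `k - 1 ≤ k' ≤ k`. -/
theorem statement18
    (h : Polynomial ℝ) (hpos : ∀ t ∈ Set.Icc (-1 : ℝ) 1, 0 < h.eval t)
    (α : ℝ) (hα : -1 < α) (σ : ℤ) (hσ : σ = -1 ∨ σ = 0 ∨ σ = 1)
    (m : ℤ) (hm : 0 ≤ |m| + σ)
    (P P1 : ℕ → Polynomial ℝ)
    (hPdeg : ∀ l, (P l).degree = l) (hPlead : ∀ l, 0 < (P l).leadingCoeff)
    (hPorth : ∀ l l', (∫ η in Set.Ioo (-1 : ℝ) 1,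
        (1 - η ^ 2) ^ α * (P l).eval η * (P l').eval η)
      = if l = l' then (1 : ℝ) else 0)
    (hP1deg : ∀ l, (P1 l).degree = l) (hP1lead : ∀ l, 0 < (P1 l).leadingCoeff)
    (hP1orth : ∀ l l', (∫ η in Set.Ioo (-1 : ℝ) 1,
        (1 - η ^ 2) ^ (α + 1) * (P1 l).eval η * (P1 l').eval η)
      = if l = l' then (1 : ℝ) else 0)
    (Q Q1 : ℕ → ℕ → Polynomial ℝ)
    (hQdeg : ∀ l k, (Q l k).degree = k) (hQlead : ∀ l k, 0 < (Q l k).leadingCoeff)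
    (hQorth : ∀ l j k : ℕ, (∫ t in Set.Ioo (-1 : ℝ) 1,
        (1 - t) ^ α * (1 + t) ^ ((|m| + σ : ℤ) : ℝ) * h.eval t ^ (2 * (l : ℝ) + 2 * α + 1)
          * (Q l j).eval t * (Q l k).eval t)
      = if j = k then (1 : ℝ) else 0)
    (hQ1deg : ∀ l k, (Q1 l k).degree = k) (hQ1lead : ∀ l k, 0 < (Q1 l k).leadingCoeff)
    (hQ1orth : ∀ l j k : ℕ, (∫ t in Set.Ioo (-1 : ℝ) 1,
        (1 - t) ^ (α + 1) * (1 + t) ^ ((|m| + σ : ℤ) : ℝ)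
          * h.eval t ^ (2 * (l : ℝ) + 2 * α + 3)
          * (Q1 l j).eval t * (Q1 l k).eval t)
      = if j = k then (1 : ℝ) else 0)
    (Φ Φ1 : ℕ → ℕ → ℝ → ℝ → ℝ → ℂ)
    (hΦ : ∀ l k t φ η, Φ l k t φ η =
      Complex.exp (Complex.I * m * φ) *
        (((1 + t) ^ (((|m| + σ : ℤ) : ℝ) / 2) * h.eval t ^ l
          * (P l).eval η * (Q l k).eval t : ℝ) : ℂ))
    (hΦ1 : ∀ l k t φ η, Φ1 l k t φ η =
      Complex.exp (Complex.I * m * φ) *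
        (((1 + t) ^ (((|m| + σ : ℤ) : ℝ) / 2) * h.eval t ^ l
          * (P1 l).eval η * (Q1 l k).eval t : ℝ) : ℂ)) :
    ∀ l l' k k' : ℕ,
      ¬(l' + 1 = l ∧ k ≤ k' + 1 ∧ k' ≤ k) →
      (2 * Real.pi : ℂ)⁻¹ *
        (∫ t in Set.Ioo (-1 : ℝ) 1, ∫ η in Set.Ioo (-1 : ℝ) 1,
          ∫ φ in Set.Ico (0 : ℝ) (2 * Real.pi),
            (((1 - η ^ 2) ^ (α + 1) * (1 - t) ^ (α + 1) * h.eval t ^ (2 * α + 3) : ℝ) : ℂ)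
              * (starRingEnd ℂ)
                  (((h.eval t : ℝ) : ℂ)⁻¹ * deriv (fun y : ℝ => Φ l k t φ y) η)
              * Φ1 l' k' t φ η)
      = 0 :=
  statement18_general h hpos α hα σ m P P1 hPdeg hPorth hP1deg hP1orth Q Q1 hQdeg hQorth hQ1deg
    hQ1orth Φ Φ1 hΦ hΦ1
end
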